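/- arXiv:1511.04087 — 6 statements merged into one kernel-verified Lean document; each statement's English description precedes it below -/
import Mathlib

section
/- There exists a constant C > 0 (depending only on u₀, r, and b) such that for all 0 ≤ t₀ ≤ t and all v ∈ B̄_r(u), one has e^{2t₀}·∫_t^∞ ‖Φ(t₀,s)‖·|b(v(s))| ds ≤ C·e^{−2t}; in particular e^{2t}·∫_t^∞ ‖Φ(t,s)‖·|b(v(s))| ds ≤ C·e^{−2t} for all t ≥ 0. Moreover, if r > 0 and 0 < |u₀| < r are sufficiently small, then T_u maps B̄_r(u) into B̄_r(u). -/
open Filter Topology MeasureTheory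

/-- `A₂ = d(d+2)`. -/
noncomputable def A2 (d : ℕ) : ℝ := (d : ℝ) * ((d : ℝ) + 2)

/-- `A₃ = (1/4)·d·(d+2)²·q²`. -/
noncomputable def A3 (d : ℕ) (q : ℝ) : ℝ := (1/4) * (d : ℝ) * ((d : ℝ) + 2)^2 * q^2

/-- The fundamental matrix `Φ(t,s)` of the linear system. -/
noncomputable def Phi (d : ℕ) (t s : ℝ) : Matrix (Fin 4) (Fin 4) ℝ :=
  !![1, (A2 d / (2 * (d : ℝ))) * (Real.exp (-2*(t-s)) - 1), 0, 0;
     0, Real.exp (-2*(t-s)), 0, 0;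
     0, 0, Real.exp (-2*(t-s)), 0;
     0, 0, 0, Real.exp (-2*(t-s))]

/-- The nonlinearity `b : ℝ⁴ → ℝ⁴`. -/
noncomputable def bfun (d : ℕ) (q : ℝ) (v : Fin 4 → ℝ) : Fin 4 → ℝ :=
  ![ -(v 0) * ((d : ℝ) * (v 0)^2 + (v 2)^2 - 2 * v 2) + (2 * A3 d q / (d : ℝ)) * (v 3)^2,
     -2 * v 1 * ((d : ℝ) * (v 0)^2 - v 0 + (v 2)^2 - 2 * v 2),
     -(v 2) * ((d : ℝ) * (v 0)^2 + (v 2)^2 - 3 * v 2) + (d : ℝ) * (v 0)^2 + A3 d q * (v 3)^2,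
     -(v 3) * ((d : ℝ) * (v 0)^2 - 2 * v 0 + (v 2)^2 - 3 * v 2) ]

/-- The nonlinear integral operator `T_u v(t) = u(t) - ∫_t^∞ Φ(t,s) b(v(s)) ds`. -/
noncomputable def Tmap (d : ℕ) (q : ℝ) (u v : ℝ → Fin 4 → ℝ) : ℝ → Fin 4 → ℝ :=
  fun t => u t - ∫ s in Set.Ioi t, (Phi d t s).mulVec (bfun d q (v s))

/-- Membership in the Banach space `𝕍`: continuity on `[0,∞)` and finiteness of the
weighted sup norm `sup_{t ≥ 0} e^{2t}|v(t)|`. -/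
def memV (v : ℝ → Fin 4 → ℝ) : Prop :=
  ContinuousOn v (Set.Ici 0) ∧ ∃ M : ℝ, ∀ t ≥ (0:ℝ), Real.exp (2*t) * ‖v t‖ ≤ M

/-- The weighted sup norm `‖v‖ = sup_{t ≥ 0} e^{2t}|v(t)|`. -/
noncomputable def Vnorm (v : ℝ → Fin 4 → ℝ) : ℝ :=
  ⨆ t : Set.Ici (0:ℝ), Real.exp (2 * (t : ℝ)) * ‖v (t : ℝ)‖

/-- Membership in the closed ball `B̄_r(u) = {v ∈ 𝕍 : ‖v - u‖ ≤ r}`. -/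
def inBall (r : ℝ) (u v : ℝ → Fin 4 → ℝ) : Prop :=
  memV v ∧ ∀ t ≥ (0:ℝ), Real.exp (2*t) * ‖v t - u t‖ ≤ r

/-- The initial vector `u₀ = ((A₂/(2d))y₀, y₀, z₀, w₀)`. -/
noncomputable def uZero (d : ℕ) (y0 z0 w0 : ℝ) : Fin 4 → ℝ :=
  ![A2 d / (2 * (d : ℝ)) * y0, y0, z0, w0]

/-- The solution `u(t) = Φ(t,0)u₀ = e^{-2t} u₀` of the linear system. -/
noncomputable def ufun (d : ℕ) (y0 z0 w0 : ℝ) : ℝ → Fin 4 → ℝ :=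
  fun t => Real.exp (-2*t) • uZero d y0 z0 w0

/-- An (entrywise sup) norm on 4×4 matrices. -/
noncomputable def matNorm (M : Matrix (Fin 4) (Fin 4) ℝ) : ℝ := ⨆ i, ⨆ j, |M i j|

open Set Real Matrix

/-! A function `v` in the ball satisfies `|v(s)| ≤ R e^{-2s}` with `R = r + |u₀|`. Since `b` has
no constant or linear part, `|b(v(s))| ≤ K R² e^{-4s}`, while `‖Φ(t,s)‖ ≤ c e^{2(s-t)}` for
`s ≥ t`; so the integrand is at most `c K R² e^{-2t} e^{-2s}`, and integrating over `(t, ∞)`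
gives both estimates. The same bound gives `e^{2t} |T_u v(t) - u(t)| ≤ 2 c K R²`, which is at
most `r` for small `r` because `R < 2r` makes it quadratic in `r`. Continuity of `T_u v` comes
from the cocycle identity `Φ(t,s) = Φ(t,0) Φ(0,s)`, which turns the integral into `Φ(t,0)`
applied to the tail integral `∫_t^∞` of one fixed integrable function. -/

lemma integral_mulVec {α : Type*} [MeasurableSpace α] {μ : Measure α} {m n : Type*} [Fintype m]
    [Fintype n] (M : Matrix m n ℝ) {f : α → n → ℝ} (hf : Integrable f μ) :
    ∫ a, M *ᵥ f a ∂μ = M *ᵥ ∫ a, f a ∂μ :=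
  (LinearMap.toContinuousLinearMap (Matrix.mulVecLin M)).integral_comp_comm hf

lemma setIntegral_Ioi_le_of_le_exp {f : ℝ → ℝ} {t C a : ℝ} (ha : 0 < a)
    (hf0 : ∀ s > t, 0 ≤ f s) (hf : ∀ s > t, f s ≤ C * exp (-a * s)) :
    ∫ s in Ioi t, f s ≤ C * exp (-a * t) / a := by
  have hint : IntegrableOn (fun s => C * exp (-a * s)) (Ioi t) :=
    (exp_neg_integrableOn_Ioi t ha).const_mul C
  calc ∫ s in Ioi t, f s ≤ ∫ s in Ioi t, C * exp (-a * s) :=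
        integral_mono_of_nonneg ((ae_restrict_iff' measurableSet_Ioi).2 (ae_of_all _ hf0)) hint
          ((ae_restrict_iff' measurableSet_Ioi).2 (ae_of_all _ hf))
    _ = C * exp (-a * t) / a := by
      rw [integral_const_mul, integral_exp_mul_Ioi (neg_lt_zero.2 ha)]; field_simp

lemma exp_two_mul_mul_exp_neg_two_mul (t : ℝ) : exp (2 * t) * exp (-2 * t) = 1 := by
  rw [← exp_add]; simp

lemma exp_two_mul_mul_le_iff {s x r : ℝ} : exp (2 * s) * x ≤ r ↔ x ≤ r * exp (-2 * s) := by
  rw [← le_div_iff₀' (exp_pos _), div_eq_mul_inv, ← exp_neg, neg_mul]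

lemma abs_cubic_le {D α β c x y z n : ℝ} (hD : 0 ≤ D) (hα : |α| ≤ 2) (hβ : |β| ≤ 3)
    (hc : |c| ≤ 2) (hx : |x| ≤ n) (hy : |y| ≤ n) (hz : |z| ≤ n) :
    |c * y * (D * x ^ 2 + α * x + z ^ 2 + β * z)| ≤ 2 * n * ((D + 1) * n ^ 2 + 5 * n) := by
  have hn : 0 ≤ n := (abs_nonneg x).trans hx
  have hquad : |D * x ^ 2 + α * x + z ^ 2 + β * z| ≤ (D + 1) * n ^ 2 + 5 * n :=
    calc |D * x ^ 2 + α * x + z ^ 2 + β * z|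
        ≤ |D * x ^ 2| + |α * x| + |z ^ 2| + |β * z| :=
          (abs_add_le _ _).trans (add_le_add_left (abs_add_three _ _ _) _)
      _ = D * |x| ^ 2 + |α| * |x| + |z| ^ 2 + |β| * |z| := by
        simp only [abs_mul, abs_pow, abs_of_nonneg hD]
      _ ≤ D * n ^ 2 + 2 * n + n ^ 2 + 3 * n := by gcongr
      _ = (D + 1) * n ^ 2 + 5 * n := by ring
  rw [abs_mul, abs_mul]
  gcongr

lemma abs_le_matNorm (M : Matrix (Fin 4) (Fin 4) ℝ) (i j : Fin 4) : |M i j| ≤ matNorm M :=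
  (le_ciSup (Finite.bddAbove (finite_range fun j => |M i j|)) j).trans
    (le_ciSup (Finite.bddAbove (finite_range fun i => ⨆ j, |M i j|)) i)

lemma matNorm_nonneg (M : Matrix (Fin 4) (Fin 4) ℝ) : 0 ≤ matNorm M :=
  (abs_nonneg _).trans (abs_le_matNorm M 0 0)

lemma matNorm_le {M : Matrix (Fin 4) (Fin 4) ℝ} {c : ℝ} (h : ∀ i j, |M i j| ≤ c) :
    matNorm M ≤ c :=
  ciSup_le fun i => ciSup_le fun j => h i j

lemma norm_mulVec_le_four_mul_matNorm (M : Matrix (Fin 4) (Fin 4) ℝ) (x : Fin 4 → ℝ) :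
    ‖M *ᵥ x‖ ≤ 4 * matNorm M * ‖x‖ := by
  refine (pi_norm_le_iff_of_nonneg (by have := matNorm_nonneg M; positivity)).2 fun i => ?_
  calc ‖(M *ᵥ x) i‖ ≤ ∑ j, |M i j| * |x j| := by
        simpa only [Matrix.mulVec, dotProduct, Real.norm_eq_abs, abs_mul]
          using Finset.abs_sum_le_sum_abs (fun j => M i j * x j) Finset.univ
    _ ≤ ∑ _j : Fin 4, matNorm M * ‖x‖ :=
        Finset.sum_le_sum fun j _ => mul_le_mul (abs_le_matNorm M i j)
          (norm_le_pi_norm x j) (abs_nonneg _) (matNorm_nonneg M)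
    _ = 4 * matNorm M * ‖x‖ := by simp [mul_assoc]

lemma Phi_mul_Phi (d : ℕ) (t τ s : ℝ) : Phi d t τ * Phi d τ s = Phi d t s := by
  have h : ∀ a b c : ℝ, exp (-2 * (a - b)) * exp (-2 * (b - c)) = exp (-2 * (a - c)) := by
    intro a b c; rw [← exp_add]; ring_nf
  ext i j
  simp only [Phi, ← h t τ s]
  fin_cases i <;> fin_cases j <;> simp [Matrix.mul_apply, Fin.sum_univ_four]
  ring

lemma continuous_Phi (d : ℕ) : Continuous fun p : ℝ × ℝ => Phi d p.1 p.2 := by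
  unfold Phi; fun_prop

noncomputable def cPhi (d : ℕ) : ℝ := 1 + A2 d / (2 * d)

lemma cPhi_pos (d : ℕ) : 0 < cPhi d := by unfold cPhi A2; positivity

lemma matNorm_Phi_le (d : ℕ) {t s : ℝ} (hts : t ≤ s) :
    matNorm (Phi d t s) ≤ cPhi d * exp (-2 * (t - s)) := by
  have ha : 0 ≤ A2 d / (2 * d) := by unfold A2; positivity
  have hE : 1 ≤ exp (-2 * (t - s)) := one_le_exp (by linarith)
  refine matNorm_le fun i j => ?_
  simp only [Phi, cPhi]
  generalize exp (-2 * (t - s)) = E at hE ⊢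
  have hEa : 0 ≤ A2 d / (2 * d) * (E - 1) := mul_nonneg ha (by linarith)
  fin_cases i <;> fin_cases j <;> simp [abs_of_nonneg hEa, abs_of_pos (by linarith : 0 < E)] <;>
    nlinarith

lemma abs_bfun_apply_le (d : ℕ) (q : ℝ) (w : Fin 4 → ℝ) (i : Fin 4) :
    |bfun d q w i| ≤ 2 * ‖w‖ * ((d + 1) * ‖w‖ ^ 2 + 5 * ‖w‖)
      + (d + A3 d q + 2 * A3 d q / d) * ‖w‖ ^ 2 := by
  set n := ‖w‖
  have hd : (0 : ℝ) ≤ d := Nat.cast_nonneg d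
  have hA3 : 0 ≤ A3 d q := by unfold A3; positivity
  have hA3d : 0 ≤ 2 * A3 d q / d := by positivity
  have hw : ∀ i, |w i| ≤ n := fun i => norm_le_pi_norm w i
  have hsq : ∀ i, w i ^ 2 ≤ n ^ 2 := fun i => sq_le_sq' (abs_le.1 (hw i)).1 (abs_le.1 (hw i)).2
  have hquad : d * w 0 ^ 2 + A3 d q * w 3 ^ 2 + 2 * A3 d q / d * w 3 ^ 2
      ≤ (d + A3 d q + 2 * A3 d q / d) * n ^ 2 := by
    nlinarith [hsq 0, hsq 3]
  have hpos : 0 ≤ d * w 0 ^ 2 ∧ 0 ≤ A3 d q * w 3 ^ 2 ∧ 0 ≤ 2 * A3 d q / d * w 3 ^ 2 :=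
    ⟨by positivity, by positivity, by positivity⟩
  fin_cases i
  · have h := abs_cubic_le (α := 0) (β := -2) (c := -1) hd (by norm_num) (by norm_num)
      (by norm_num) (hw 0) (hw 0) (hw 2)
    have e : bfun d q w 0 = -1 * w 0 * (d * w 0 ^ 2 + 0 * w 0 + w 2 ^ 2 + -2 * w 2)
        + 2 * A3 d q / d * w 3 ^ 2 := by simp only [bfun, Matrix.cons_val]; ring
    show |bfun d q w 0| ≤ _
    rw [e]
    refine (abs_add_le _ _).trans ?_
    rw [abs_of_nonneg hpos.2.2]
    linarith
  · have h := abs_cubic_le (α := -1) (β := -2) (c := -2) hd (by norm_num) (by norm_num)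
      (by norm_num) (hw 0) (hw 1) (hw 2)
    have e : bfun d q w 1 = -2 * w 1 * (d * w 0 ^ 2 + -1 * w 0 + w 2 ^ 2 + -2 * w 2) := by
      simp only [bfun, Matrix.cons_val]; ring
    show |bfun d q w 1| ≤ _
    rw [e]
    linarith
  · have h := abs_cubic_le (α := 0) (β := -3) (c := -1) hd (by norm_num) (by norm_num)
      (by norm_num) (hw 0) (hw 2) (hw 2)
    have e : bfun d q w 2 = -1 * w 2 * (d * w 0 ^ 2 + 0 * w 0 + w 2 ^ 2 + -3 * w 2)
        + (d * w 0 ^ 2 + A3 d q * w 3 ^ 2) := by simp only [bfun, Matrix.cons_val]; ring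
    show |bfun d q w 2| ≤ _
    rw [e]
    refine (abs_add_le _ _).trans ?_
    rw [abs_of_nonneg (add_nonneg hpos.1 hpos.2.1)]
    linarith
  · have h := abs_cubic_le (α := -2) (β := -3) (c := -1) hd (by norm_num) (by norm_num)
      (by norm_num) (hw 0) (hw 3) (hw 2)
    have e : bfun d q w 3 = -1 * w 3 * (d * w 0 ^ 2 + -2 * w 0 + w 2 ^ 2 + -3 * w 2) := by
      simp only [bfun, Matrix.cons_val]; ring
    show |bfun d q w 3| ≤ _
    rw [e]
    linarith

noncomputable def bConst (d : ℕ) (q R : ℝ) : ℝ :=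
  2 * ((d : ℝ) + 1) * R + d + 10 + A3 d q + 2 * A3 d q / d

lemma bConst_pos (d : ℕ) (q : ℝ) {R : ℝ} (hR : 0 ≤ R) : 0 < bConst d q R := by
  have h1 : 0 ≤ 2 * ((d : ℝ) + 1) * R := mul_nonneg (by positivity) hR
  have h2 : 0 ≤ A3 d q := by unfold A3; positivity
  have h3 : 0 ≤ 2 * A3 d q / d := by positivity
  unfold bConst
  linarith [(Nat.cast_nonneg d : (0 : ℝ) ≤ d)]

lemma norm_bfun_le (d : ℕ) (q : ℝ) {R : ℝ} {w : Fin 4 → ℝ} (hw : ‖w‖ ≤ R) :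
    ‖bfun d q w‖ ≤ bConst d q R * ‖w‖ ^ 2 := by
  have hd : (0 : ℝ) ≤ d := Nat.cast_nonneg d
  have hcubic : 2 * ‖w‖ * ((d + 1) * ‖w‖ ^ 2 + 5 * ‖w‖) ≤ (2 * (d + 1) * R + 10) * ‖w‖ ^ 2 := by
    nlinarith [mul_le_mul_of_nonneg_right hw (mul_nonneg (sq_nonneg ‖w‖) hd)]
  have hbound (i : Fin 4) : |bfun d q w i| ≤ bConst d q R * ‖w‖ ^ 2 := by
    have := abs_bfun_apply_le d q w i
    unfold bConst
    linarith
  exact (pi_norm_le_iff_of_nonneg ((abs_nonneg _).trans (hbound 0))).2 hbound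

lemma continuous_bfun (d : ℕ) (q : ℝ) : Continuous (bfun d q) := by
  unfold bfun; fun_prop

noncomputable def ballConst (d : ℕ) (q R : ℝ) : ℝ := cPhi d * bConst d q R * R ^ 2

lemma ballConst_pos (d : ℕ) (q : ℝ) {R : ℝ} (hR : 0 < R) : 0 < ballConst d q R :=
  mul_pos (mul_pos (cPhi_pos d) (bConst_pos d q hR.le)) (pow_pos hR 2)

lemma exists_two_mul_ballConst_le (d : ℕ) (q : ℝ) :
    ∃ ε > 0, ∀ r < ε, ∀ ρ, 0 ≤ ρ → ρ < r → 2 * ballConst d q (r + ρ) ≤ r := by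
  set K := cPhi d * bConst d q 2
  have hK : 0 < K := mul_pos (cPhi_pos d) (bConst_pos d q zero_le_two)
  refine ⟨min 1 (1 / (8 * K)), by positivity, fun r hr ρ hρ hρr => ?_⟩
  have hr1 : r ≤ 1 := (hr.trans_le (min_le_left _ _)).le
  have hrK : 8 * K * r ≤ 1 := by
    have := hr.trans_le (min_le_right _ _)
    rw [lt_div_iff₀ (by positivity)] at this
    linarith
  have hbConst : bConst d q (r + ρ) ≤ bConst d q 2 := by unfold bConst; gcongr; linarith
  calc 2 * ballConst d q (r + ρ)
      ≤ 2 * (cPhi d * bConst d q 2 * (2 * r) ^ 2) := by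
        rw [ballConst]
        have := cPhi_pos d
        have := bConst_pos d q (R := r + ρ) (by linarith)
        gcongr <;> linarith
    _ = 8 * K * r * r := by ring
    _ ≤ r := mul_le_of_le_one_left (by linarith) hrK

lemma norm_ufun (d : ℕ) (y0 z0 w0 t : ℝ) :
    ‖ufun d y0 z0 w0 t‖ = exp (-2 * t) * ‖uZero d y0 z0 w0‖ := by
  rw [ufun, norm_smul, norm_of_nonneg (exp_pos _).le]

lemma continuous_ufun (d : ℕ) (y0 z0 w0 : ℝ) : Continuous (ufun d y0 z0 w0) := by
  unfold ufun; fun_prop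

section Ball

variable {d : ℕ} {q y0 z0 w0 r : ℝ} {v : ℝ → Fin 4 → ℝ}

lemma norm_le_of_inBall (hv : inBall r (ufun d y0 z0 w0) v) {s : ℝ} (hs : 0 ≤ s) :
    ‖v s‖ ≤ (r + ‖uZero d y0 z0 w0‖) * exp (-2 * s) := by
  have h := exp_two_mul_mul_le_iff.1 (hv.2 s hs)
  calc ‖v s‖ ≤ ‖v s - ufun d y0 z0 w0 s‖ + ‖ufun d y0 z0 w0 s‖ := norm_le_norm_sub_add _ _
    _ ≤ r * exp (-2 * s) + exp (-2 * s) * ‖uZero d y0 z0 w0‖ := by rw [norm_ufun]; gcongr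
    _ = (r + ‖uZero d y0 z0 w0‖) * exp (-2 * s) := by ring

lemma matNorm_Phi_mul_norm_bfun_le (hv : inBall r (ufun d y0 z0 w0) v) {t s : ℝ} (ht : 0 ≤ t)
    (hts : t ≤ s) :
    matNorm (Phi d t s) * ‖bfun d q (v s)‖
      ≤ ballConst d q (r + ‖uZero d y0 z0 w0‖) * exp (-2 * t) * exp (-2 * s) := by
  set R := r + ‖uZero d y0 z0 w0‖
  have hv_le := norm_le_of_inBall hv (ht.trans hts)
  have hR : 0 ≤ R := nonneg_of_mul_nonneg_left ((norm_nonneg _).trans hv_le) (exp_pos _)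
  have hv_R : ‖v s‖ ≤ R := hv_le.trans (mul_le_of_le_one_right hR (exp_le_one_iff.2 (by linarith)))
  calc matNorm (Phi d t s) * ‖bfun d q (v s)‖
      ≤ (cPhi d * exp (-2 * (t - s))) * (bConst d q R * (R * exp (-2 * s)) ^ 2) := by
        refine mul_le_mul (matNorm_Phi_le d hts) ((norm_bfun_le d q hv_R).trans ?_)
          (norm_nonneg _) (mul_pos (cPhi_pos d) (exp_pos _)).le
        gcongr
        exact (bConst_pos d q hR).le
    _ = ballConst d q R * exp (-2 * t) * exp (-2 * s) := by
        have h : exp (-2 * (t - s)) * exp (-2 * s) ^ 2 = exp (-2 * t) * exp (-2 * s) := by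
          rw [sq, ← exp_add, ← exp_add, ← exp_add]; ring_nf
        rw [ballConst]
        linear_combination cPhi d * bConst d q R * R ^ 2 * h

lemma exp_mul_integral_matNorm_Phi_mul_le (hv : inBall r (ufun d y0 z0 w0) v) {t₀ t : ℝ}
    (ht₀ : 0 ≤ t₀) (ht : t₀ ≤ t) :
    exp (2 * t₀) * ∫ s in Ioi t, matNorm (Phi d t₀ s) * ‖bfun d q (v s)‖
      ≤ ballConst d q (r + ‖uZero d y0 z0 w0‖) / 2 * exp (-2 * t) := by
  set B := ballConst d q (r + ‖uZero d y0 z0 w0‖)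
  have hI := setIntegral_Ioi_le_of_le_exp two_pos
    (fun s _ => mul_nonneg (matNorm_nonneg _) (norm_nonneg _))
    (fun s hs => matNorm_Phi_mul_norm_bfun_le (q := q) hv ht₀ (ht.trans (le_of_lt hs)))
  calc exp (2 * t₀) * ∫ s in Ioi t, matNorm (Phi d t₀ s) * ‖bfun d q (v s)‖
      ≤ exp (2 * t₀) * (B * exp (-2 * t₀) * exp (-2 * t) / 2) := by gcongr
    _ = B / 2 * exp (-2 * t) := by
      linear_combination B / 2 * exp (-2 * t) * exp_two_mul_mul_exp_neg_two_mul t₀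

lemma exp_mul_norm_Tmap_sub_le (hv : inBall r (ufun d y0 z0 w0) v) {t : ℝ} (ht : 0 ≤ t) :
    exp (2 * t) * ‖Tmap d q (ufun d y0 z0 w0) v t - ufun d y0 z0 w0 t‖
      ≤ 2 * ballConst d q (r + ‖uZero d y0 z0 w0‖) * exp (-2 * t) := by
  set B := ballConst d q (r + ‖uZero d y0 z0 w0‖)
  have hI := setIntegral_Ioi_le_of_le_exp two_pos (fun s _ => norm_nonneg _)
    (C := 4 * (B * exp (-2 * t))) (f := fun s => ‖Phi d t s *ᵥ bfun d q (v s)‖) fun s hs => by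
      have := matNorm_Phi_mul_norm_bfun_le (q := q) hv ht (le_of_lt hs)
      calc ‖Phi d t s *ᵥ bfun d q (v s)‖ ≤ 4 * matNorm (Phi d t s) * ‖bfun d q (v s)‖ :=
            norm_mulVec_le_four_mul_matNorm _ _
        _ ≤ 4 * (B * exp (-2 * t)) * exp (-2 * s) := by linarith
  have hnorm : ‖∫ s in Ioi t, Phi d t s *ᵥ bfun d q (v s)‖
      ≤ 4 * (B * exp (-2 * t)) * exp (-2 * t) / 2 :=
    (norm_integral_le_integral_norm _).trans hI
  rw [Tmap, sub_sub_cancel_left, norm_neg]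
  calc exp (2 * t) * ‖∫ s in Ioi t, Phi d t s *ᵥ bfun d q (v s)‖
      ≤ exp (2 * t) * (4 * (B * exp (-2 * t)) * exp (-2 * t) / 2) := by gcongr
    _ = 2 * B * exp (-2 * t) := by
      linear_combination 2 * B * exp (-2 * t) * exp_two_mul_mul_exp_neg_two_mul t

lemma continuousOn_Tmap (hv : inBall r (ufun d y0 z0 w0) v) :
    ContinuousOn (Tmap d q (ufun d y0 z0 w0) v) (Ici 0) := by
  set g := fun s => Phi d 0 s *ᵥ bfun d q (v s)
  have hmulVec : Continuous fun p : Matrix (Fin 4) (Fin 4) ℝ × (Fin 4 → ℝ) => p.1 *ᵥ p.2 :=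
    continuous_fst.matrix_mulVec continuous_snd
  have hg_cont : ContinuousOn g (Ici 0) :=
    hmulVec.comp_continuousOn
      (((continuous_Phi d).comp (continuous_const.prodMk continuous_id)).continuousOn.prodMk
        ((continuous_bfun d q).comp_continuousOn hv.1.1))
  have hg_int : IntegrableOn g (Ioi 0) := by
    refine Integrable.mono' ((exp_neg_integrableOn_Ioi 0 two_pos).const_mul
      (4 * ballConst d q (r + ‖uZero d y0 z0 w0‖)))
      ((hg_cont.mono Ioi_subset_Ici_self).aestronglyMeasurable measurableSet_Ioi)
      ((ae_restrict_iff' measurableSet_Ioi).2 (ae_of_all _ fun s hs => ?_))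
    have := matNorm_Phi_mul_norm_bfun_le (q := q) hv le_rfl (le_of_lt hs)
    rw [mul_zero, exp_zero, mul_one] at this
    calc ‖g s‖ ≤ 4 * matNorm (Phi d 0 s) * ‖bfun d q (v s)‖ := norm_mulVec_le_four_mul_matNorm _ _
      _ ≤ _ := by linarith
  have hTmap : ∀ t ∈ Ici (0 : ℝ),
      Tmap d q (ufun d y0 z0 w0) v t = ufun d y0 z0 w0 t - Phi d t 0 *ᵥ ∫ s in Ioi t, g s := by
    intro t ht
    rw [Tmap, ← integral_mulVec _ (hg_int.mono_set (Ioi_subset_Ioi ht))]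
    simp only [g, mulVec_mulVec, Phi_mul_Phi]
  refine ContinuousOn.congr ?_ hTmap
  exact (continuous_ufun d y0 z0 w0).continuousOn.sub (hmulVec.comp_continuousOn
    (((continuous_Phi d).comp (continuous_id.prodMk continuous_const)).continuousOn.prodMk
      hg_int.continuousOn_Ici_primitive_Ioi))

lemma inBall_Tmap (hv : inBall r (ufun d y0 z0 w0) v)
    (hsmall : 2 * ballConst d q (r + ‖uZero d y0 z0 w0‖) ≤ r) :
    inBall r (ufun d y0 z0 w0) (Tmap d q (ufun d y0 z0 w0) v) := by
  have hr : 0 ≤ r := (mul_nonneg (exp_pos _).le (norm_nonneg _)).trans (hv.2 0 le_rfl)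
  have hdist : ∀ t ≥ (0 : ℝ),
      exp (2 * t) * ‖Tmap d q (ufun d y0 z0 w0) v t - ufun d y0 z0 w0 t‖ ≤ r := fun t ht => by
    have hE : exp (-2 * t) ≤ 1 := exp_le_one_iff.2 (by linarith)
    nlinarith [exp_mul_norm_Tmap_sub_le (q := q) hv ht, exp_pos (-2 * t)]
  refine ⟨⟨continuousOn_Tmap hv, ‖uZero d y0 z0 w0‖ + r, fun t ht => ?_⟩, hdist⟩
  have hu : exp (2 * t) * ‖ufun d y0 z0 w0 t‖ = ‖uZero d y0 z0 w0‖ := by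
    rw [norm_ufun]
    linear_combination ‖uZero d y0 z0 w0‖ * exp_two_mul_mul_exp_neg_two_mul t
  calc exp (2 * t) * ‖Tmap d q (ufun d y0 z0 w0) v t‖
      ≤ exp (2 * t) * (‖Tmap d q (ufun d y0 z0 w0) v t - ufun d y0 z0 w0 t‖
        + ‖ufun d y0 z0 w0 t‖) := by gcongr; exact norm_le_norm_sub_add _ _
    _ ≤ ‖uZero d y0 z0 w0‖ + r := by rw [mul_add, hu]; linarith [hdist t ht]

end Ball

theorem stmt1_general (d : ℕ) (q : ℝ) :
    (∀ y0 z0 w0 r : ℝ, 0 < r →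
      ∃ C > (0:ℝ),
        (∀ t0 t : ℝ, 0 ≤ t0 → t0 ≤ t →
          ∀ v, inBall r (ufun d y0 z0 w0) v →
            Real.exp (2*t0) * ∫ s in Set.Ioi t, matNorm (Phi d t0 s) * ‖bfun d q (v s)‖
              ≤ C * Real.exp (-2*t)) ∧
        (∀ t : ℝ, 0 ≤ t →
          ∀ v, inBall r (ufun d y0 z0 w0) v →
            Real.exp (2*t) * ∫ s in Set.Ioi t, matNorm (Phi d t s) * ‖bfun d q (v s)‖
              ≤ C * Real.exp (-2*t))) ∧
    (∃ ε > (0:ℝ), ∀ r : ℝ, 0 < r → r < ε → ∀ y0 z0 w0 : ℝ,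
      0 < ‖uZero d y0 z0 w0‖ → ‖uZero d y0 z0 w0‖ < r →
      ∀ v, inBall r (ufun d y0 z0 w0) v →
        inBall r (ufun d y0 z0 w0) (Tmap d q (ufun d y0 z0 w0) v)) := by
  refine ⟨fun y0 z0 w0 r hr => ?_, ?_⟩
  · refine ⟨ballConst d q (r + ‖uZero d y0 z0 w0‖) / 2,
      half_pos (ballConst_pos d q (by positivity)), fun t₀ t ht₀ ht v hv => ?_,
      fun t ht v hv => ?_⟩
    · exact exp_mul_integral_matNorm_Phi_mul_le hv ht₀ ht
    · exact exp_mul_integral_matNorm_Phi_mul_le hv ht le_rfl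
  · obtain ⟨ε, hε, hsmall⟩ := exists_two_mul_ballConst_le d q
    exact ⟨ε, hε, fun r _ hrε y0 z0 w0 _ hu₀ v hv =>
      inBall_Tmap hv (hsmall r hrε _ (norm_nonneg _) hu₀)⟩

/-- There is a constant `C > 0` (depending only on `u₀`, `r` and `b`) with
`e^{2t₀} ∫_t^∞ ‖Φ(t₀,s)‖·|b(v(s))| ds ≤ C e^{-2t}` for all `0 ≤ t₀ ≤ t` and `v ∈ B̄_r(u)`;
in particular `e^{2t} ∫_t^∞ ‖Φ(t,s)‖·|b(v(s))| ds ≤ C e^{-2t}` for `t ≥ 0`.  Moreover, if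
`r` and `0 < |u₀| < r` are sufficiently small, `T_u` maps `B̄_r(u)` into itself. -/
theorem stmt1 (d : ℕ) (hd : 2 ≤ d) (q : ℝ) :
    (∀ y0 z0 w0 r : ℝ, 0 < r →
      ∃ C > (0:ℝ),
        (∀ t0 t : ℝ, 0 ≤ t0 → t0 ≤ t →
          ∀ v, inBall r (ufun d y0 z0 w0) v →
            Real.exp (2*t0) * ∫ s in Set.Ioi t, matNorm (Phi d t0 s) * ‖bfun d q (v s)‖
              ≤ C * Real.exp (-2*t)) ∧
        (∀ t : ℝ, 0 ≤ t →
          ∀ v, inBall r (ufun d y0 z0 w0) v →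
            Real.exp (2*t) * ∫ s in Set.Ioi t, matNorm (Phi d t s) * ‖bfun d q (v s)‖
              ≤ C * Real.exp (-2*t))) ∧
    (∃ ε > (0:ℝ), ∀ r : ℝ, 0 < r → r < ε → ∀ y0 z0 w0 : ℝ,
      0 < ‖uZero d y0 z0 w0‖ → ‖uZero d y0 z0 w0‖ < r →
      ∀ v, inBall r (ufun d y0 z0 w0) v →
        inBall r (ufun d y0 z0 w0) (Tmap d q (ufun d y0 z0 w0) v)) :=
  stmt1_general d q
end

section
/- Suppose r > 0 and 0 < |u₀| < r are sufficiently small that T_u maps B̄_r(u) into itself, and let v ∈ B_r(u) = {v ∈ 𝕍 : ‖v − u‖ < r}. Then 1 is not an eigenvalue of the operator D(T_u)_v: if h ∈ 𝕍 satisfies h(t) = −∫_t^∞ Φ(t,s)·Db(v(s))·h(s) ds for all t ≥ 0, then h is identically 0. -/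
open Filter Topology MeasureTheory

/-- The Jacobian matrix `Db` of `b : ℝ⁴ → ℝ⁴`. -/
noncomputable def Db (d : ℕ) (q : ℝ) (x : Fin 4 → ℝ) : Matrix (Fin 4) (Fin 4) ℝ :=
  Matrix.of fun i j => fderiv ℝ (fun y => bfun d q y i) x (Pi.single j 1)

/-! The linearised equation is a Volterra equation whose kernel `Φ(t,s)·Db(v(s))` is bounded by
`K e^{-2t}` for `0 ≤ t < s`: the growth `e^{2(s-t)}` of `Φ(t,s)` is absorbed by the decay
`|v(s)| ≲ e^{-2s}`, since `Db` vanishes at the origin. Feeding a bound `|h(s)| ≤ C e^{-as}` into the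
equation therefore returns `|h(t)| ≤ (K C / a) e^{-(a+2)t}`, and iterating from `‖h‖ < ∞` gives
`|h(t)| ≤ ‖h‖ (K/2)ⁿ / n!` for every `n`. -/

open Real Set
open scoped Nat

theorem Matrix.norm_mulVec_le_of_forall_norm_le {m n R : Type*} [Fintype m] [Fintype n]
    [SeminormedRing R] (M : Matrix m n R) (w : n → R) {B : ℝ} (hB : 0 ≤ B)
    (hM : ∀ i j, ‖M i j‖ ≤ B) : ‖M.mulVec w‖ ≤ Fintype.card n * B * ‖w‖ := by
  refine (pi_norm_le_iff_of_nonneg (by positivity)).2 fun i => ?_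
  calc ‖∑ j, M i j * w j‖ ≤ ∑ j, ‖M i j‖ * ‖w j‖ := norm_sum_le_of_le _ fun j _ => norm_mul_le _ _
    _ ≤ ∑ _j : n, B * ‖w‖ := by
        gcongr with j
        exacts [hM i j, norm_le_pi_norm w j]
    _ = Fintype.card n * B * ‖w‖ := by simp [mul_assoc]

section Volterra

variable {E : Type*} [NormedAddCommGroup E] [NormedSpace ℝ E] {h : ℝ → E} {F : ℝ → ℝ → E}
  {K c : ℝ}

theorem norm_le_of_volterra_of_decay (hK : 0 ≤ K)
    (hh : ∀ t ≥ 0, ‖h t‖ ≤ ‖∫ s in Ioi t, F t s‖)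
    (hF : ∀ t ≥ 0, ∀ s > t, ‖F t s‖ ≤ K * exp (-c * t) * ‖h s‖)
    {a B : ℝ} (ha : a < 0) (hB : ∀ s ≥ 0, ‖h s‖ ≤ B * exp (a * s)) :
    ∀ t ≥ 0, ‖h t‖ ≤ K * B / -a * exp ((a - c) * t) := by
  intro t ht
  have hbound : ∀ s ∈ Ioi t, ‖F t s‖ ≤ K * exp (-c * t) * B * exp (a * s) := fun s hs => by
    have hs : t < s := hs
    calc ‖F t s‖ ≤ K * exp (-c * t) * ‖h s‖ := hF t ht s hs
      _ ≤ K * exp (-c * t) * (B * exp (a * s)) := by gcongr; exact hB s (ht.trans hs.le)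
      _ = _ := by ring
  calc ‖h t‖ ≤ ‖∫ s in Ioi t, F t s‖ := hh t ht
    _ ≤ ∫ s in Ioi t, K * exp (-c * t) * B * exp (a * s) :=
        norm_integral_le_of_norm_le ((integrableOn_exp_mul_Ioi ha t).const_mul _)
          (ae_restrict_of_forall_mem measurableSet_Ioi hbound)
    _ = K * B / -a * exp ((a - c) * t) := by
        rw [integral_const_mul, integral_exp_mul_Ioi ha, sub_mul, sub_eq_add_neg, exp_add]
        field_simp

theorem norm_le_of_volterra_iterate (hK : 0 ≤ K) (hc : 0 < c)
    (hh : ∀ t ≥ 0, ‖h t‖ ≤ ‖∫ s in Ioi t, F t s‖)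
    (hF : ∀ t ≥ 0, ∀ s > t, ‖F t s‖ ≤ K * exp (-c * t) * ‖h s‖)
    {M : ℝ} (hM : ∀ s ≥ 0, ‖h s‖ ≤ M * exp (-c * s)) (n : ℕ) :
    ∀ t ≥ 0, ‖h t‖ ≤ M * (K / c) ^ n / n ! * exp (-((n + 1) * c) * t) := by
  induction n with
  | zero => simpa using hM
  | succ n ih =>
    intro t ht
    have hstep := norm_le_of_volterra_of_decay hK hh hF (neg_neg_of_pos (by positivity)) ih t ht
    convert hstep using 2
    · rw [neg_neg, pow_succ, Nat.factorial_succ]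
      push_cast
      field_simp
    · congr 1
      push_cast
      ring

theorem eq_zero_of_volterra (hK : 0 ≤ K) (hc : 0 < c)
    (hh : ∀ t ≥ 0, ‖h t‖ ≤ ‖∫ s in Ioi t, F t s‖)
    (hF : ∀ t ≥ 0, ∀ s > t, ‖F t s‖ ≤ K * exp (-c * t) * ‖h s‖)
    {M : ℝ} (hM : ∀ s ≥ 0, ‖h s‖ ≤ M * exp (-c * s)) :
    ∀ t ≥ 0, h t = 0 := by
  intro t ht
  have hM0 : 0 ≤ M := by simpa using (norm_nonneg _).trans (hM 0 le_rfl)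
  have hle : ∀ n : ℕ, ‖h t‖ ≤ M * (K / c) ^ n / n ! := fun n => by
    refine (norm_le_of_volterra_iterate hK hc hh hF hM n t ht).trans ?_
    refine mul_le_of_le_one_right (by positivity) (exp_le_one_iff.2 ?_)
    nlinarith [mul_pos (by positivity : (0 : ℝ) < n + 1) hc]
  have hlim : Filter.Tendsto (fun n : ℕ => M * (K / c) ^ n / n !) Filter.atTop (nhds 0) := by
    simpa using FloorSemiring.tendsto_mul_pow_div_factorial_sub_atTop M (K / c) 0
  exact norm_le_zero_iff.1 (ge_of_tendsto' hlim hle)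

end Volterra

theorem memV.norm_le {v : ℝ → Fin 4 → ℝ} (hv : memV v) :
    ∃ M, ∀ t ≥ 0, ‖v t‖ ≤ M * exp (-2 * t) := by
  obtain ⟨-, M, hM⟩ := hv
  refine ⟨M, fun t ht => ?_⟩
  calc ‖v t‖ = exp (-2 * t) * (exp (2 * t) * ‖v t‖) := by
        rw [← mul_assoc, ← exp_add]; simp
    _ ≤ exp (-2 * t) * M := by gcongr; exact hM t ht
    _ = M * exp (-2 * t) := mul_comm _ _

theorem abs_Phi_apply_le (d : ℕ) {t s : ℝ} (hts : t ≤ s) (i j : Fin 4) :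
    |Phi d t s i j| ≤ (1 + A2 d / (2 * d)) * exp (2 * (s - t)) := by
  have hc : 0 ≤ A2 d / (2 * d) := by unfold A2; positivity
  have hE : exp (-(2 * (t - s))) = exp (2 * (s - t)) := by ring_nf
  have hE1 : 1 ≤ exp (2 * (s - t)) := one_le_exp (by linarith)
  fin_cases i <;> fin_cases j <;>
    simp [Phi, hE, abs_of_nonneg hc, abs_of_nonneg (sub_nonneg.2 hE1)] <;> nlinarith

noncomputable def DbExplicit (d : ℕ) (q : ℝ) (x : Fin 4 → ℝ) : Matrix (Fin 4) (Fin 4) ℝ :=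
  !![-(3 * d * x 0 ^ 2 + x 2 ^ 2 - 2 * x 2), 0, -x 0 * (2 * x 2 - 2), 4 * (A3 d q / d) * x 3;
    -2 * x 1 * (2 * d * x 0 - 1), -2 * (d * x 0 ^ 2 - x 0 + x 2 ^ 2 - 2 * x 2),
      -2 * x 1 * (2 * x 2 - 2), 0;
    -2 * d * x 0 * x 2 + 2 * d * x 0, 0, -(d * x 0 ^ 2 + 3 * x 2 ^ 2 - 6 * x 2), 2 * A3 d q * x 3;
    -x 3 * (2 * d * x 0 - 2), 0, -x 3 * (2 * x 2 - 3), -(d * x 0 ^ 2 - 2 * x 0 + x 2 ^ 2 - 3 * x 2)]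

theorem Db_eq_DbExplicit (d : ℕ) (q : ℝ) (x : Fin 4 → ℝ) : Db d q x = DbExplicit d q x := by
  ext i j
  fin_cases i <;> fin_cases j <;>
    simp (disch := fun_prop) [Db, bfun, DbExplicit, fderiv_fun_mul, fderiv_fun_add,
      fderiv_fun_sub, fderiv_fun_pow, (hasFDerivAt_apply _ _).fderiv, Pi.single_apply,
      -mul_eq_mul_left_iff, -mul_eq_mul_right_iff] <;> ring

theorem abs_DbExplicit_apply_le (d : ℕ) (q : ℝ) (x : Fin 4 → ℝ) (i j : Fin 4) :
    |DbExplicit d q x i j| ≤ 4 * (d + 2 + |A3 d q| + |A3 d q / d|) * (‖x‖ + ‖x‖ ^ 2) := by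
  set N := ‖x‖
  have hN : 0 ≤ N := norm_nonneg x
  have hd : (0 : ℝ) ≤ d := d.cast_nonneg
  have hx : ∀ k, |x k| ≤ N := fun k => norm_le_pi_norm x k
  have hxx : ∀ k l, |x k * x l| ≤ N ^ 2 := fun k l => by
    rw [abs_mul, sq]; exact mul_le_mul (hx k) (hx l) (abs_nonneg _) hN
  have hdx : ∀ k, |d * x k| ≤ d * N := fun k => by
    rw [abs_mul, abs_of_nonneg hd]; exact mul_le_mul_of_nonneg_left (hx k) hd
  have hdxx : ∀ k l, |d * (x k * x l)| ≤ d * N ^ 2 := fun k l => by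
    rw [abs_mul, abs_of_nonneg hd]; exact mul_le_mul_of_nonneg_left (hxx k l) hd
  have hax : ∀ a : ℝ, |a * x 3| ≤ |a| * N := fun a => by
    rw [abs_mul]; exact mul_le_mul_of_nonneg_left (hx 3) (abs_nonneg a)
  have ha := abs_nonneg (A3 d q)
  have hb := abs_nonneg (A3 d q / d)
  rw [abs_le]
  fin_cases i <;> fin_cases j <;>
    simp only [DbExplicit, Matrix.of_apply, Matrix.cons_val', Matrix.cons_val, Matrix.cons_val_zero,
      Matrix.cons_val_one, Matrix.cons_val_fin_one, Fin.isValue, Fin.zero_eta, Fin.mk_one,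
      Fin.reduceFinMk] <;> constructor <;>
  linarith [abs_le.1 (hx 0), abs_le.1 (hx 1), abs_le.1 (hx 2), abs_le.1 (hx 3),
    abs_le.1 (hxx 0 0), abs_le.1 (hxx 0 2), abs_le.1 (hxx 2 2), abs_le.1 (hxx 1 0),
    abs_le.1 (hxx 1 2), abs_le.1 (hxx 3 0), abs_le.1 (hxx 3 2), abs_le.1 (hdx 0),
    abs_le.1 (hdxx 0 0), abs_le.1 (hdxx 0 1), abs_le.1 (hdxx 0 2), abs_le.1 (hdxx 0 3),
    abs_le.1 (hax (A3 d q)), abs_le.1 (hax (A3 d q / d)),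
    mul_nonneg hd hN, mul_nonneg hd (sq_nonneg N), mul_nonneg ha hN, mul_nonneg ha (sq_nonneg N),
    mul_nonneg hb hN, mul_nonneg hb (sq_nonneg N), sq_nonneg N]

theorem exists_norm_Phi_Db_mulVec_le (d : ℕ) (q : ℝ) {v : ℝ → Fin 4 → ℝ} {M : ℝ}
    (hM : ∀ s ≥ 0, ‖v s‖ ≤ M * exp (-2 * s)) :
    ∃ K, 0 ≤ K ∧ ∀ t ≥ 0, ∀ s > t, ∀ w : Fin 4 → ℝ,
      ‖(Phi d t s).mulVec ((Db d q (v s)).mulVec w)‖ ≤ K * exp (-2 * t) * ‖w‖ := by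
  have hM0 : 0 ≤ M := by simpa using (norm_nonneg _).trans (hM 0 le_rfl)
  set cΦ := 1 + A2 d / (2 * d)
  set cD := 4 * (d + 2 + |A3 d q| + |A3 d q / d|)
  have hcΦ : 0 ≤ cΦ := by unfold cΦ A2; positivity
  have hcD : 0 ≤ cD := by positivity
  refine ⟨16 * cΦ * cD * (M + M ^ 2), by positivity, fun t ht s hts w => ?_⟩
  have hs : 0 ≤ s := ht.trans hts.le
  have hdecay : ‖v s‖ + ‖v s‖ ^ 2 ≤ (M + M ^ 2) * exp (-2 * s) := by
    have hv := hM s hs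
    have hv' : ‖v s‖ ≤ M := hv.trans (mul_le_of_le_one_right hM0 (exp_le_one_iff.2 (by linarith)))
    nlinarith [norm_nonneg (v s), exp_pos (-2 * s)]
  have hΦ := Matrix.norm_mulVec_le_of_forall_norm_le (Phi d t s) ((Db d q (v s)).mulVec w)
    (by positivity) fun i j => abs_Phi_apply_le d hts.le i j
  have hD := Matrix.norm_mulVec_le_of_forall_norm_le (DbExplicit d q (v s)) w
    (by positivity) fun i j => abs_DbExplicit_apply_le d q (v s) i j
  rw [← Db_eq_DbExplicit] at hD
  simp only [Fintype.card_fin, Nat.cast_ofNat] at hΦ hD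
  calc _ ≤ 4 * (cΦ * exp (2 * (s - t))) * ‖(Db d q (v s)).mulVec w‖ := hΦ
    _ ≤ 4 * (cΦ * exp (2 * (s - t))) * (4 * (cD * ((M + M ^ 2) * exp (-2 * s))) * ‖w‖) := by
        gcongr
        exact hD.trans (by gcongr)
    _ = 16 * cΦ * cD * (M + M ^ 2) * exp (-2 * t) * ‖w‖ := by
        rw [show -2 * t = 2 * (s - t) + -2 * s by ring, exp_add]
        ring

theorem stmt9_general (d : ℕ) (q : ℝ)
    (v : ℝ → Fin 4 → ℝ) (hv : memV v)
    (h : ℝ → Fin 4 → ℝ) (hh : memV h)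
    (hfix : ∀ t ≥ (0:ℝ),
      h t = -∫ s in Set.Ioi t, (Phi d t s).mulVec ((Db d q (v s)).mulVec (h s))) :
    ∀ t ≥ (0:ℝ), h t = 0 := by
  obtain ⟨M, hM⟩ := hv.norm_le
  obtain ⟨K, hK, hkernel⟩ := exists_norm_Phi_Db_mulVec_le d q hM
  obtain ⟨Mh, hMh⟩ := hh.norm_le
  refine eq_zero_of_volterra hK two_pos (fun t ht => ?_) (fun t ht s hs => hkernel t ht s hs (h s)) hMh
  rw [hfix t ht, norm_neg]

/-- If `r` and `0 < |u₀| < r` are small enough that `T_u` maps `B̄_r(u)` into itself and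
`v ∈ B_r(u)`, then `1` is not an eigenvalue of `D(T_u)_v`: any `h ∈ 𝕍` with
`h(t) = −∫_t^∞ Φ(t,s)·Db(v(s))·h(s) ds` for all `t ≥ 0` vanishes identically. -/
theorem stmt9 (d : ℕ) (hd : 2 ≤ d) (q : ℝ) (y0 z0 w0 r : ℝ) (hr : 0 < r)
    (hu0 : 0 < ‖uZero d y0 z0 w0‖) (hu0r : ‖uZero d y0 z0 w0‖ < r)
    (hmap : ∀ v, inBall r (ufun d y0 z0 w0) v →
      inBall r (ufun d y0 z0 w0) (Tmap d q (ufun d y0 z0 w0) v))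
    (v : ℝ → Fin 4 → ℝ) (hv : memV v) (hvball : Vnorm (v - ufun d y0 z0 w0) < r)
    (h : ℝ → Fin 4 → ℝ) (hh : memV h)
    (hfix : ∀ t ≥ (0:ℝ),
      h t = -∫ s in Set.Ioi t, (Phi d t s).mulVec ((Db d q (v s)).mulVec (h s))) :
    ∀ t ≥ (0:ℝ), h t = 0 :=
  stmt9_general d q v hv h hh hfix
end

section
/- For every u ∈ 𝕍, the operator T_u has at most one fixed point in 𝕍: if v, ṽ ∈ 𝕍 satisfy T_u v = v and T_u ṽ = ṽ, then v = ṽ. -/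
open Filter Topology MeasureTheory

/-!
Put `w = v - ṽ`. Subtracting the two fixed-point equations gives
`w(t) = ∫_t^∞ Φ(t,s) (b(ṽ(s)) - b(v(s))) ds`. The nonlinearity `b` has no constant or linear
part, so on the ball of radius `R` it is Lipschitz with constant `O(R + R²)`; as `v` and `ṽ` are
`O(e^{-2s})`, this factor absorbs the growth `e^{2(s-t)}` of `Φ(t,s)`, and
`|w(t)| ≤ K e^{-2t} ∫_t^∞ |w(s)| ds`. Starting from `|w(t)| = O(e^{-2t})` and feeding each bound
back into this inequality gives `|w(t)| ≤ C (K/2)^n / n! · e^{-2(n+1)t}` for every `n`, so `w = 0`.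
-/

open Real Matrix Set

lemma nonpos_of_decay_bootstrap {f : ℝ → ℝ} {β K C₀ : ℝ} (hβ : 0 < β)
    (h₀ : ∀ t ≥ 0, f t ≤ C₀ * exp (-β * t))
    (hstep : ∀ C a, 0 < a → (∀ s ≥ 0, f s ≤ C * exp (-a * s)) →
      ∀ t ≥ 0, f t ≤ K * C / a * exp (-(a + β) * t)) :
    ∀ t ≥ 0, f t ≤ 0 := by
  have hiter : ∀ n : ℕ, ∀ t ≥ 0,
      f t ≤ C₀ * (K / β) ^ n / n.factorial * exp (-(β * (n + 1)) * t) := by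
    intro n
    induction n with
    | zero => simpa using h₀
    | succ n ih =>
      convert hstep _ _ (by positivity) ih using 3 with t
      push_cast [Nat.factorial_succ, pow_succ]
      field_simp
  intro t ht
  have hbound : ∀ n : ℕ, f t ≤ |C₀| * |K / β| ^ n / n.factorial := fun n => calc
    f t ≤ C₀ * (K / β) ^ n / n.factorial * exp (-(β * (n + 1)) * t) := hiter n t ht
    _ ≤ |C₀ * (K / β) ^ n / n.factorial| * 1 := by
      gcongr
      · exact le_abs_self _
      · exact exp_le_one_iff.mpr (by rw [neg_mul]; exact neg_nonpos.mpr (by positivity))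
    _ = |C₀| * |K / β| ^ n / n.factorial := by simp [abs_mul, abs_div, abs_pow]
  have hlim : Tendsto (fun n : ℕ => |C₀| * |K / β| ^ n / n.factorial) atTop (𝓝 0) := by
    simpa [mul_div_assoc] using
      (FloorSemiring.tendsto_pow_div_factorial_atTop |K / β|).const_mul |C₀|
  exact ge_of_tendsto' hlim hbound

section NormedRing

variable {α : Type*} [NonUnitalSeminormedRing α]

lemma norm_mul_sub_mul_le (a b a' b' : α) :
    ‖a * b - a' * b'‖ ≤ ‖a‖ * ‖b - b'‖ + ‖a - a'‖ * ‖b'‖ := calc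
  ‖a * b - a' * b'‖ = ‖a * (b - b') + (a - a') * b'‖ := by rw [mul_sub, sub_mul]; abel_nf
  _ ≤ ‖a‖ * ‖b - b'‖ + ‖a - a'‖ * ‖b'‖ :=
    (norm_add_le _ _).trans (add_le_add (norm_mul_le _ _) (norm_mul_le _ _))

lemma norm_mul_sub_mul_le_of_le {a b a' b' : α} {R δ : ℝ} (ha : ‖a‖ ≤ R) (hb' : ‖b'‖ ≤ R)
    (hda : ‖a - a'‖ ≤ δ) (hdb : ‖b - b'‖ ≤ δ) : ‖a * b - a' * b'‖ ≤ 2 * R * δ := calc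
  ‖a * b - a' * b'‖ ≤ R * δ + δ * R := (norm_mul_sub_mul_le a b a' b').trans
    (add_le_add (mul_le_mul ha hdb (norm_nonneg _) ((norm_nonneg a).trans ha))
      (mul_le_mul hda hb' (norm_nonneg _) ((norm_nonneg _).trans hda)))
  _ = 2 * R * δ := by ring

lemma norm_mul_mul_sub_mul_mul_le_of_le {a b c a' b' c' : α} {R δ : ℝ} (ha : ‖a‖ ≤ R)
    (hb : ‖b‖ ≤ R) (hb' : ‖b'‖ ≤ R) (hc' : ‖c'‖ ≤ R) (hda : ‖a - a'‖ ≤ δ)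
    (hdb : ‖b - b'‖ ≤ δ) (hdc : ‖c - c'‖ ≤ δ) : ‖a * b * c - a' * b' * c'‖ ≤ 3 * R ^ 2 * δ := by
  have hR : 0 ≤ R := (norm_nonneg a).trans ha
  have hδ : 0 ≤ δ := (norm_nonneg _).trans hda
  calc ‖a * b * c - a' * b' * c'‖ ≤ R ^ 2 * δ + 2 * R * δ * R :=
        (norm_mul_sub_mul_le _ _ _ _).trans (add_le_add
          (mul_le_mul (by rw [sq]; exact norm_mul_le_of_le ha hb) hdc (norm_nonneg _)
            (by positivity))
          (mul_le_mul (norm_mul_sub_mul_le_of_le ha hb' hda hdb) hc' (norm_nonneg _)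
            (by positivity)))
    _ = 3 * R ^ 2 * δ := by ring

lemma norm_add_mul_le_of_le {S P : α} {T B : ℝ} (hS : ‖S‖ ≤ T) (k : α) (hP : ‖P‖ ≤ B) :
    ‖S + k * P‖ ≤ T + ‖k‖ * B :=
  (norm_add_le _ _).trans (add_le_add hS (norm_mul_le_of_le le_rfl hP))

end NormedRing

lemma Phi_mulVec (d : ℕ) (t s : ℝ) (x : Fin 4 → ℝ) :
    Phi d t s *ᵥ x = ![x 0 + A2 d / (2 * d) * (exp (-2 * (t - s)) - 1) * x 1,
      exp (-2 * (t - s)) * x 1, exp (-2 * (t - s)) * x 2, exp (-2 * (t - s)) * x 3] := by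
  ext i; fin_cases i <;> simp [Phi, mulVec, dotProduct, Fin.sum_univ_four]

lemma norm_Phi_mulVec_le (d : ℕ) {t s : ℝ} (hts : t ≤ s) (x : Fin 4 → ℝ) :
    ‖Phi d t s *ᵥ x‖ ≤ (1 + A2 d / (2 * d)) * exp (-2 * (t - s)) * ‖x‖ := by
  rw [Phi_mulVec]
  set c := A2 d / (2 * d)
  set E := exp (-2 * (t - s))
  have hc : 0 ≤ c := by unfold c A2; positivity
  have hE : 1 ≤ E := one_le_exp (by linarith)
  have hx : ∀ i, ‖x i‖ ≤ ‖x‖ := norm_le_pi_norm x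
  have hdiag : ∀ i, ‖E * x i‖ ≤ (1 + c) * E * ‖x‖ := fun i => calc
    ‖E * x i‖ ≤ 1 * E * ‖x‖ := by
      rw [norm_mul, norm_of_nonneg (by linarith), one_mul]; gcongr; exact hx i
    _ ≤ (1 + c) * E * ‖x‖ := by gcongr; linarith
  refine (pi_norm_le_iff_of_nonneg (by positivity)).mpr fun i => ?_
  fin_cases i
  · calc ‖x 0 + c * (E - 1) * x 1‖ ≤ ‖x‖ + c * (E - 1) * ‖x‖ := by
          refine (norm_add_le _ _).trans (add_le_add (hx 0) ?_)
          rw [norm_mul, norm_of_nonneg (mul_nonneg hc (by linarith))]; gcongr; exact hx 1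
      _ ≤ (1 + c) * E * ‖x‖ := by nlinarith [norm_nonneg x]
  exacts [hdiag 1, hdiag 2, hdiag 3]

lemma exists_norm_bfun_sub_le (d : ℕ) (q : ℝ) : ∃ L, 0 ≤ L ∧ ∀ {R : ℝ} {x y : Fin 4 → ℝ},
    ‖x‖ ≤ R → ‖y‖ ≤ R → ‖bfun d q x - bfun d q y‖ ≤ L * (R + R ^ 2) * ‖x - y‖ := by
  set A := A3 d q
  set c := 2 * A3 d q / d
  set L : ℝ := 6 * d + 2 * ‖A‖ + 2 * ‖c‖ + 18
  refine ⟨L, by positivity, fun {R x y} hx hy => ?_⟩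
  rw [mul_assoc]
  set ρ := (R + R ^ 2) * ‖x - y‖
  have hR : 0 ≤ R := (norm_nonneg x).trans hx
  have hρ : 0 ≤ ρ := by positivity
  have hxi : ∀ i, ‖x i‖ ≤ R := fun i => (norm_le_pi_norm x i).trans hx
  have hyi : ∀ i, ‖y i‖ ≤ R := fun i => (norm_le_pi_norm y i).trans hy
  have hdi : ∀ i, ‖x i - y i‖ ≤ ‖x - y‖ := norm_le_pi_norm (x - y)
  have quad : ∀ i j, ‖x i * x j - y i * y j‖ ≤ 2 * ρ := fun i j =>
    (norm_mul_sub_mul_le_of_le (hxi i) (hyi j) (hdi i) (hdi j)).trans (by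
      unfold ρ; nlinarith [norm_nonneg (x - y)])
  have cube : ∀ i j k, ‖x i * x j * x k - y i * y j * y k‖ ≤ 3 * ρ := fun i j k =>
    (norm_mul_mul_sub_mul_mul_le_of_le (hxi i) (hxi j) (hyi j) (hyi k) (hdi i) (hdi j)
      (hdi k)).trans (by unfold ρ; nlinarith [norm_nonneg (x - y)])
  have hdρ : 0 ≤ d * ρ := by positivity
  have hAρ : 0 ≤ ‖A‖ * ρ := by positivity
  have hcρ : 0 ≤ ‖c‖ * ρ := by positivity
  refine (pi_norm_le_iff_of_nonneg (by positivity)).mpr fun i => ?_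
  fin_cases i
  · refine le_trans (le_of_eq (congrArg norm ?_)) ((norm_add_mul_le_of_le (norm_add_mul_le_of_le
      (norm_add_mul_le_of_le (norm_mul_le_of_le (le_refl ‖-(d : ℝ)‖) (cube 0 0 0)) (-1)
      (cube 0 2 2)) 2 (quad 0 2)) c (quad 3 3)).trans ?_)
    · simp [bfun, c]; ring
    · simp only [norm_neg, Real.norm_natCast, norm_one, Real.norm_ofNat, L]; linarith
  · refine le_trans (le_of_eq (congrArg norm ?_)) ((norm_add_mul_le_of_le (norm_add_mul_le_of_le
      (norm_add_mul_le_of_le (norm_mul_le_of_le (le_refl ‖-(2 * d : ℝ)‖) (cube 1 0 0)) 2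
      (quad 1 0)) (-2) (cube 1 2 2)) 4 (quad 1 2)).trans ?_)
    · simp [bfun]; ring
    · simp only [norm_neg, norm_mul, Real.norm_natCast, Real.norm_ofNat, L]; linarith
  · refine le_trans (le_of_eq (congrArg norm ?_)) ((norm_add_mul_le_of_le (norm_add_mul_le_of_le
      (norm_add_mul_le_of_le (norm_add_mul_le_of_le (norm_mul_le_of_le (le_refl ‖-(d : ℝ)‖)
      (cube 2 0 0)) (-1) (cube 2 2 2)) 3 (quad 2 2)) d (quad 0 0)) A (quad 3 3)).trans ?_)
    · simp [bfun, A]; ring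
    · simp only [norm_neg, Real.norm_natCast, norm_one, Real.norm_ofNat, L]; linarith
  · refine le_trans (le_of_eq (congrArg norm ?_)) ((norm_add_mul_le_of_le (norm_add_mul_le_of_le
      (norm_add_mul_le_of_le (norm_mul_le_of_le (le_refl ‖-(d : ℝ)‖) (cube 3 0 0)) 2
      (quad 3 0)) (-1) (cube 3 2 2)) 3 (quad 3 2)).trans ?_)
    · simp [bfun]; ring
    · simp only [norm_neg, Real.norm_natCast, norm_one, Real.norm_ofNat, L]; linarith

lemma memV.exists_norm_le_exp {v : ℝ → Fin 4 → ℝ} (hv : memV v) :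
    ∃ M, 0 ≤ M ∧ ∀ t ≥ 0, ‖v t‖ ≤ M * exp (-2 * t) := by
  obtain ⟨-, M, hM⟩ := hv
  refine ⟨M, (mul_nonneg (exp_pos _).le (norm_nonneg _)).trans (hM 0 le_rfl), fun t ht => ?_⟩
  calc ‖v t‖ = exp (-2 * t) * (exp (2 * t) * ‖v t‖) := by
        rw [← mul_assoc, ← exp_add]; simp
    _ ≤ M * exp (-2 * t) := by rw [mul_comm M]; gcongr; exact hM t ht

lemma exists_norm_Phi_mulVec_bfun_sub_le (d : ℕ) (q : ℝ) {M : ℝ} (hM : 0 ≤ M) :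
    ∃ K, 0 ≤ K ∧ ∀ {t s : ℝ} {x y : Fin 4 → ℝ}, t ≤ s → 0 ≤ s →
      ‖x‖ ≤ M * exp (-2 * s) → ‖y‖ ≤ M * exp (-2 * s) →
      ‖Phi d t s *ᵥ (bfun d q x - bfun d q y)‖ ≤ K * exp (-2 * t) * ‖x - y‖ := by
  obtain ⟨L, hL, hLip⟩ := exists_norm_bfun_sub_le d q
  have hc : 0 ≤ A2 d / (2 * d) := by unfold A2; positivity
  refine ⟨(1 + A2 d / (2 * d)) * L * (M + M ^ 2), by positivity,
    fun {t s x y} hts hs hx hy => ?_⟩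
  have hE : exp (-2 * s) ≤ 1 := exp_le_one_iff.mpr (by linarith)
  have hR : M * exp (-2 * s) + (M * exp (-2 * s)) ^ 2 ≤ (M + M ^ 2) * exp (-2 * s) := by
    nlinarith [exp_pos (-2 * s),
      mul_nonneg (mul_nonneg (sq_nonneg M) (exp_pos (-2 * s)).le) (sub_nonneg.mpr hE)]
  calc ‖Phi d t s *ᵥ (bfun d q x - bfun d q y)‖
      ≤ (1 + A2 d / (2 * d)) * exp (-2 * (t - s)) *
          (L * ((M + M ^ 2) * exp (-2 * s)) * ‖x - y‖) := by
        refine (norm_Phi_mulVec_le d hts _).trans ?_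
        gcongr
        exact (hLip hx hy).trans (by gcongr)
    _ = (1 + A2 d / (2 * d)) * L * (M + M ^ 2) * (exp (-2 * (t - s)) * exp (-2 * s)) *
          ‖x - y‖ := by
        ring
    _ = (1 + A2 d / (2 * d)) * L * (M + M ^ 2) * exp (-2 * t) * ‖x - y‖ := by
        rw [← exp_add]; ring_nf

lemma bfun_zero (d : ℕ) (q : ℝ) : bfun d q 0 = 0 := by
  ext i; fin_cases i <;> simp [bfun]

lemma continuousOn_Phi_mulVec_bfun (d : ℕ) (q : ℝ) {v : ℝ → Fin 4 → ℝ} (hv : memV v) {t : ℝ}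
    (ht : 0 ≤ t) : ContinuousOn (fun s => Phi d t s *ᵥ bfun d q (v s)) (Ioi t) := by
  have hΦ : Continuous (Phi d t) := by unfold Phi; fun_prop
  have hb : Continuous (bfun d q) := by unfold bfun; fun_prop
  have hΦb : Continuous fun p : ℝ × (Fin 4 → ℝ) => Phi d t p.1 *ᵥ bfun d q p.2 :=
    (hΦ.comp continuous_fst).matrix_mulVec (hb.comp continuous_snd)
  exact hΦb.comp_continuousOn (f := fun s => (s, v s))
    (continuousOn_id.prodMk (hv.1.mono fun s hs => ht.trans (le_of_lt hs)))

lemma integrableOn_Phi_mulVec_bfun (d : ℕ) (q : ℝ) {v : ℝ → Fin 4 → ℝ} (hv : memV v) {t : ℝ}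
    (ht : 0 ≤ t) : IntegrableOn (fun s => Phi d t s *ᵥ bfun d q (v s)) (Ioi t) := by
  obtain ⟨M, hM, hvM⟩ := hv.exists_norm_le_exp
  obtain ⟨K, hK0, hK⟩ := exists_norm_Phi_mulVec_bfun_sub_le d q hM
  refine Integrable.mono' (((exp_neg_integrableOn_Ioi t two_pos).const_mul
    (K * exp (-2 * t) * M))) ((continuousOn_Phi_mulVec_bfun d q hv ht).aestronglyMeasurable
    measurableSet_Ioi) ((ae_restrict_iff' measurableSet_Ioi).mpr (ae_of_all _ fun s hts => ?_))
  have hs : 0 ≤ s := ht.trans (le_of_lt hts)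
  have h := hK (le_of_lt hts) hs (hvM s hs) (by rw [norm_zero]; positivity)
  rw [bfun_zero, sub_zero, sub_zero] at h
  calc ‖Phi d t s *ᵥ bfun d q (v s)‖ ≤ K * exp (-2 * t) * (M * exp (-2 * s)) :=
        h.trans (by gcongr; exact hvM s hs)
    _ = K * exp (-2 * t) * M * exp (-2 * s) := by ring

section FixedPoints

variable {d : ℕ} {q : ℝ} {u v vt : ℝ → Fin 4 → ℝ}

lemma sub_eq_integral_of_Tmap_eq (hv : memV v) (hvt : memV vt) {t : ℝ} (ht : 0 ≤ t)
    (hfix : Tmap d q u v t = v t) (hfix' : Tmap d q u vt t = vt t) :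
    v t - vt t = ∫ s in Ioi t, Phi d t s *ᵥ (bfun d q (vt s) - bfun d q (v s)) := by
  simp_rw [mulVec_sub]
  rw [integral_sub (integrableOn_Phi_mulVec_bfun d q hvt ht)
    (integrableOn_Phi_mulVec_bfun d q hv ht), ← hfix, ← hfix', Tmap, Tmap]
  abel

lemma exists_decay_step_of_Tmap_eq (hv : memV v) (hvt : memV vt)
    (hfix : ∀ t ≥ 0, Tmap d q u v t = v t) (hfix' : ∀ t ≥ 0, Tmap d q u vt t = vt t)
    {M : ℝ} (hM : 0 ≤ M) (hvM : ∀ s ≥ 0, ‖v s‖ ≤ M * exp (-2 * s))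
    (hvtM : ∀ s ≥ 0, ‖vt s‖ ≤ M * exp (-2 * s)) :
    ∃ K, ∀ C a, 0 < a → (∀ s ≥ 0, ‖v s - vt s‖ ≤ C * exp (-a * s)) →
      ∀ t ≥ 0, ‖v t - vt t‖ ≤ K * C / a * exp (-(a + 2) * t) := by
  obtain ⟨K, hK0, hK⟩ := exists_norm_Phi_mulVec_bfun_sub_le d q hM
  refine ⟨K, fun C a ha hC t ht => ?_⟩
  rw [sub_eq_integral_of_Tmap_eq hv hvt ht (hfix t ht) (hfix' t ht)]
  refine (norm_integral_le_of_norm_le ((exp_neg_integrableOn_Ioi t ha).const_mul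
    (K * exp (-2 * t) * C)) ((ae_restrict_iff' measurableSet_Ioi).mpr
    (ae_of_all _ fun s hts => ?_))).trans (le_of_eq ?_)
  · have hs : 0 ≤ s := ht.trans (le_of_lt hts)
    calc ‖Phi d t s *ᵥ (bfun d q (vt s) - bfun d q (v s))‖
        ≤ K * exp (-2 * t) * ‖v s - vt s‖ := by
          rw [norm_sub_rev (v s)]; exact hK (le_of_lt hts) hs (hvtM s hs) (hvM s hs)
      _ ≤ K * exp (-2 * t) * (C * exp (-a * s)) := by gcongr; exact hC s hs
      _ = K * exp (-2 * t) * C * exp (-a * s) := by ring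
  · rw [integral_const_mul, integral_exp_mul_Ioi (neg_lt_zero.mpr ha), neg_div_neg_eq,
      show -(a + 2) * t = -2 * t + -a * t by ring, exp_add]
    field_simp

end FixedPoints

theorem stmt10_general (d : ℕ) (q : ℝ)
    (u : ℝ → Fin 4 → ℝ)
    (v : ℝ → Fin 4 → ℝ) (hv : memV v)
    (vt : ℝ → Fin 4 → ℝ) (hvt : memV vt)
    (hfix1 : ∀ t ≥ (0:ℝ), Tmap d q u v t = v t)
    (hfix2 : ∀ t ≥ (0:ℝ), Tmap d q u vt t = vt t) :
    ∀ t ≥ (0:ℝ), v t = vt t := by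
  obtain ⟨M₁, hM₁, hvM⟩ := hv.exists_norm_le_exp
  obtain ⟨M₂, -, hvtM⟩ := hvt.exists_norm_le_exp
  set M := max M₁ M₂
  have hvM' : ∀ s ≥ 0, ‖v s‖ ≤ M * exp (-2 * s) := fun s hs =>
    (hvM s hs).trans (by gcongr; exact le_max_left _ _)
  have hvtM' : ∀ s ≥ 0, ‖vt s‖ ≤ M * exp (-2 * s) := fun s hs =>
    (hvtM s hs).trans (by gcongr; exact le_max_right _ _)
  obtain ⟨K, hstep⟩ := exists_decay_step_of_Tmap_eq hv hvt hfix1 hfix2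
    (hM₁.trans (le_max_left _ _)) hvM' hvtM'
  have hinit : ∀ t ≥ 0, ‖v t - vt t‖ ≤ 2 * M * exp (-2 * t) := fun t ht => calc
    ‖v t - vt t‖ ≤ ‖v t‖ + ‖vt t‖ := norm_sub_le _ _
    _ ≤ 2 * M * exp (-2 * t) := by linarith [hvM' t ht, hvtM' t ht]
  intro t ht
  exact sub_eq_zero.mp (norm_le_zero_iff.mp (nonpos_of_decay_bootstrap two_pos hinit hstep t ht))

/-- For every `u ∈ 𝕍`, the operator `T_u` has at most one fixed point in `𝕍`. -/
theorem stmt10 (d : ℕ) (hd : 2 ≤ d) (q : ℝ)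
    (u : ℝ → Fin 4 → ℝ) (hu : memV u)
    (v : ℝ → Fin 4 → ℝ) (hv : memV v)
    (vt : ℝ → Fin 4 → ℝ) (hvt : memV vt)
    (hfix1 : ∀ t ≥ (0:ℝ), Tmap d q u v t = v t)
    (hfix2 : ∀ t ≥ (0:ℝ), Tmap d q u vt t = vt t) :
    ∀ t ≥ (0:ℝ), v t = vt t :=
  stmt10_general d q u v hv vt hvt hfix1 hfix2
end

section
/- Let (X,Y,Z,W) be a solution of (★) on (−∞, t_max) such that (X,Y,Z,W)(t) → (0,0,1,0) as t → −∞ and |∫_{−∞}^{T₀} X(t) dt| < ∞ for some T₀ < t_max. Suppose Y(t₀) > 0 for some t₀ and λ > 0, and set g(t) = λ·exp(∫_{−∞}^{t} X(τ)dτ) and 𝓛 = g·Y. Then 𝓛 is strictly increasing on (−∞, t_max), 𝓛(t) > 0 for all t, and 0 < ∫_{−∞}^{T₀} 𝓛(t) dt < ∞. -/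
open Filter Topology MeasureTheory

/-- `(X,Y,Z,W)` solves the nonlinear system (★) on the set `s`. -/
def StarSystem (d : ℕ) (q : ℝ) (X Y Z W : ℝ → ℝ) (s : Set ℝ) : Prop :=
  ∀ t ∈ s,
    HasDerivAt X
      (X t * ((d : ℝ) * X t^2 + Z t^2 - 1) + (A2 d / (d : ℝ)) * Y t^2
        - (2 * A3 d q / (d : ℝ)) * W t^2) t ∧
    HasDerivAt Y (Y t * ((d : ℝ) * X t^2 + Z t^2 - X t)) t ∧
    HasDerivAt Z (Z t * ((d : ℝ) * X t^2 + Z t^2 - 1) + A3 d q * W t^2) t ∧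
    HasDerivAt W (W t * ((d : ℝ) * X t^2 + Z t^2 - 2*X t + Z t)) t

/-!
`Y' = aY` and `Z' = bZ + A₃W²` are linear equations with continuous coefficients and nonnegative
forcing, so the integrating factor `exp (-∫ a)` shows that `Y` keeps the sign of `Y(t₀)`, and `Z`,
which is close to `1` near `−∞`, stays positive. Since `g' = gX`, the function `𝓛 = gY` solves
`𝓛' = (dX² + Z²)𝓛` with a positive rate, hence is strictly increasing. Near `−∞` the rate is at
least `Z² > 1/2`, so `𝓛(t) ≤ C e^{t/2}` there, which makes `𝓛` integrable on `(−∞, T₀]`.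
-/

open Set Real

section IntegratingFactor

variable {s : Set ℝ} {f a b : ℝ → ℝ} {c t : ℝ}

theorem ContinuousOn.hasDerivAt_intervalIntegral_of_isOpen (hs : IsOpen s) (hsc : Convex ℝ s)
    (ha : ContinuousOn a s) (hc : c ∈ s) (ht : t ∈ s) :
    HasDerivAt (fun u => ∫ τ in c..u, a τ) (a t) t :=
  intervalIntegral.integral_hasDerivAt_right
    ((ha.mono (hsc.ordConnected.uIcc_subset hc ht)).intervalIntegrable)
    (ha.stronglyMeasurableAtFilter hs t ht) (ha.continuousAt (hs.mem_nhds ht))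

theorem monotoneOn_of_forall_hasDerivAt_nonneg (hsc : Convex ℝ s)
    {f' : ℝ → ℝ} (hf : ∀ t ∈ s, HasDerivAt f (f' t) t) (hf' : ∀ t ∈ s, 0 ≤ f' t) :
    MonotoneOn f s :=
  monotoneOn_of_hasDerivWithinAt_nonneg hsc
    (fun t ht => (hf t ht).continuousAt.continuousWithinAt)
    (fun t ht => (hf t (interior_subset ht)).hasDerivWithinAt)
    (fun t ht => hf' t (interior_subset ht))

theorem strictMonoOn_of_forall_hasDerivAt_pos (hsc : Convex ℝ s)
    {f' : ℝ → ℝ} (hf : ∀ t ∈ s, HasDerivAt f (f' t) t) (hf' : ∀ t ∈ s, 0 < f' t) :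
    StrictMonoOn f s :=
  strictMonoOn_of_hasDerivWithinAt_pos hsc
    (fun t ht => (hf t ht).continuousAt.continuousWithinAt)
    (fun t ht => (hf t (interior_subset ht)).hasDerivWithinAt)
    (fun t ht => hf' t (interior_subset ht))

theorem monotoneOn_mul_exp_neg_integral (hs : IsOpen s) (hsc : Convex ℝ s)
    (ha : ContinuousOn a s) (hf : ∀ t ∈ s, HasDerivAt f (f t * a t + b t) t)
    (hb : ∀ t ∈ s, 0 ≤ b t) (hc : c ∈ s) :
    MonotoneOn (fun u => f u * exp (-∫ τ in c..u, a τ)) s := by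
  refine monotoneOn_of_forall_hasDerivAt_nonneg hsc
    (f' := fun t => b t * exp (-∫ τ in c..t, a τ)) (fun t ht => ?_)
    (fun t ht => mul_nonneg (hb t ht) (exp_pos _).le)
  have hA := ((ha.hasDerivAt_intervalIntegral_of_isOpen hs hsc hc ht).neg).exp
  exact ((hf t ht).mul hA).congr_deriv (by simp only [Pi.neg_apply]; ring)

theorem pos_of_hasDerivAt_mul_add_nonneg (hs : IsOpen s) (hsc : Convex ℝ s)
    (ha : ContinuousOn a s) (hf : ∀ t ∈ s, HasDerivAt f (f t * a t + b t) t)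
    (hb : ∀ t ∈ s, 0 ≤ b t) (hc : c ∈ s) (ht : t ∈ s) (hct : c ≤ t) (hfc : 0 < f c) :
    0 < f t := by
  have := monotoneOn_mul_exp_neg_integral hs hsc ha hf hb hc hc ht hct
  simp only [intervalIntegral.integral_same, neg_zero, exp_zero, mul_one] at this
  exact pos_of_mul_pos_left (hfc.trans_le this) (exp_pos _).le

theorem pos_of_hasDerivAt_mul (hs : IsOpen s) (hsc : Convex ℝ s) (ha : ContinuousOn a s)
    (hf : ∀ t ∈ s, HasDerivAt f (f t * a t) t) (hc : c ∈ s) (hfc : 0 < f c) (ht : t ∈ s) :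
    0 < f t := by
  rcases le_total c t with hct | htc
  · exact pos_of_hasDerivAt_mul_add_nonneg hs hsc ha (b := 0)
      (fun t ht => by simpa using hf t ht) (fun _ _ => le_rfl) hc ht hct hfc
  · have := monotoneOn_mul_exp_neg_integral hs hsc ha (f := -f) (b := 0)
      (fun t ht => by simpa using (hf t ht).neg) (fun _ _ => le_rfl) hc ht hc htc
    simp only [Pi.neg_apply, intervalIntegral.integral_same, neg_zero, exp_zero, mul_one] at this
    nlinarith [exp_pos (-∫ τ in c..t, a τ)]

theorem le_mul_exp_of_le_deriv (hs : IsOpen s) (hsc : Convex ℝ s) {f' : ℝ → ℝ} {κ : ℝ}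
    (hf : ∀ t ∈ s, HasDerivAt f (f' t) t) (hκ : ∀ t ∈ s, κ * f t ≤ f' t)
    (hc : c ∈ s) (ht : t ∈ s) (htc : t ≤ c) : f t ≤ f c * exp (κ * (t - c)) := by
  have := monotoneOn_mul_exp_neg_integral hs hsc continuousOn_const (a := fun _ => κ)
    (b := fun t => f' t - κ * f t) (fun t ht => (hf t ht).congr_deriv (by ring))
    (fun t ht => sub_nonneg.2 (hκ t ht)) hc ht hc htc
  simp only [intervalIntegral.integral_const, smul_eq_mul, sub_self, zero_mul, neg_zero,
    exp_zero, mul_one] at this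
  calc f t = f t * exp (-((t - c) * κ)) * exp (κ * (t - c)) := by
        rw [mul_assoc, ← exp_add]; ring_nf; simp
    _ ≤ f c * exp (κ * (t - c)) := by gcongr

end IntegratingFactor

theorem MeasureTheory.IntegrableOn.hasDerivAt_integral_Iic {f : ℝ → ℝ} {b t : ℝ}
    (hf : IntegrableOn f (Iic b)) (hft : ContinuousAt f t) (htb : t < b) :
    HasDerivAt (fun u => ∫ x in Iic u, f x) (f t) t := by
  have hleft : HasDerivAt (fun u => ∫ x in u..b, f x) (-f t) t :=
    intervalIntegral.integral_hasDerivAt_left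
      ((intervalIntegrable_iff_integrableOn_Ioc_of_le htb.le).2 (hf.mono_set Ioc_subset_Iic_self))
      ⟨Iic b, Iic_mem_nhds htb, hf.aestronglyMeasurable⟩ hft
  refine ((hleft.const_sub (∫ x in Iic b, f x)).congr_deriv (by ring)).congr_of_eventuallyEq ?_
  filter_upwards [Iic_mem_nhds htb] with u hu
  have := intervalIntegral.integral_Iic_sub_Iic (hf.mono_set (Iic_subset_Iic.2 hu)) hf
  linarith

theorem integrableAtFilter_atBot_of_le_deriv {f f' : ℝ → ℝ} {κ : ℝ} (hκ : 0 < κ)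
    (hf : ∀ᶠ t in atBot, HasDerivAt f (f' t) t ∧ 0 ≤ f t ∧ κ * f t ≤ f' t) :
    IntegrableAtFilter f atBot := by
  obtain ⟨T, hT⟩ := eventually_atBot.1 hf
  have hsub : Iic (T - 1) ⊆ Iio T := Iic_subset_Iio.2 (by linarith)
  have hbound : ∀ t ∈ Iic (T - 1), f t ≤ f (T - 1) * exp (-(κ * (T - 1))) * exp (κ * t) := by
    intro t ht
    have := le_mul_exp_of_le_deriv isOpen_Iio (convex_Iio T) (c := T - 1)
      (fun t ht => (hT t ht.le).1) (fun t ht => (hT t ht.le).2.2) (hsub self_mem_Iic) (hsub ht) ht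
    rwa [mul_assoc, ← exp_add, neg_add_eq_sub, ← mul_sub]
  have hcont : ContinuousOn f (Iic (T - 1)) :=
    fun t ht => (hT t (hsub ht).le).1.continuousAt.continuousWithinAt
  refine ⟨Iic (T - 1), Iic_mem_atBot _,
    ((integrableOn_exp_mul_Iic hκ _).const_mul (f (T - 1) * exp (-(κ * (T - 1))))).mono'
      (hcont.aestronglyMeasurable measurableSet_Iic)
      ((ae_restrict_iff' measurableSet_Iic).2 (ae_of_all _ fun t ht => ?_))⟩
  rw [norm_of_nonneg (hT t (hsub ht).le).2.1]
  exact hbound t ht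

/-- The paper's `𝓛 = g·Y` with `g(t) = λ·exp(∫_{−∞}^t X)`. -/
noncomputable def weightedY (lam : ℝ) (X Y : ℝ → ℝ) (t : ℝ) : ℝ :=
  lam * exp (∫ τ in Iic t, X τ) * Y t

namespace StarSystem

variable {d : ℕ} {q : ℝ} {X Y Z W : ℝ → ℝ} {s : Set ℝ} {c t tmax : ℝ}

theorem continuousOn_X (h : StarSystem d q X Y Z W s) : ContinuousOn X s :=
  fun t ht => (h t ht).1.continuousAt.continuousWithinAt

theorem continuousOn_Z (h : StarSystem d q X Y Z W s) : ContinuousOn Z s :=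
  fun t ht => (h t ht).2.2.1.continuousAt.continuousWithinAt

theorem continuousOn_rate (h : StarSystem d q X Y Z W s) :
    ContinuousOn (fun t => (d : ℝ) * X t ^ 2 + Z t ^ 2) s :=
  (continuousOn_const.mul (h.continuousOn_X.pow 2)).add (h.continuousOn_Z.pow 2)

theorem Y_pos (h : StarSystem d q X Y Z W s) (hs : IsOpen s) (hsc : Convex ℝ s) (hc : c ∈ s)
    (hYc : 0 < Y c) (ht : t ∈ s) : 0 < Y t :=
  pos_of_hasDerivAt_mul hs hsc (h.continuousOn_rate.sub h.continuousOn_X)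
    (fun t ht => (h t ht).2.1) hc hYc ht

theorem Z_pos (h : StarSystem d q X Y Z W (Iio tmax)) (hZ : Tendsto Z atBot (𝓝 1))
    (ht : t < tmax) : 0 < Z t := by
  obtain ⟨c, hZc, hct⟩ := ((hZ.eventually (lt_mem_nhds one_pos)).and (eventually_le_atBot t)).exists
  exact pos_of_hasDerivAt_mul_add_nonneg isOpen_Iio (convex_Iio _)
    (h.continuousOn_rate.sub continuousOn_const) (b := fun t => A3 d q * W t ^ 2)
    (fun t ht => (h t ht).2.2.1) (fun t _ => by unfold A3; positivity) (hct.trans_lt ht) ht hct hZc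

theorem hasDerivAt_integral_Iic_X (h : StarSystem d q X Y Z W (Iio tmax)) {T0 : ℝ}
    (hint : IntegrableOn X (Iic T0)) (ht : t < tmax) :
    HasDerivAt (fun u => ∫ τ in Iic u, X τ) (X t) t := by
  have hb : (t + tmax) / 2 < tmax := by linarith
  have hX : IntegrableOn X (Iic ((t + tmax) / 2)) :=
    (hint.union ((h.continuousOn_X.mono fun x hx => hx.2.trans_lt hb).integrableOn_Icc)).mono_set
      Iic_subset_Iic_union_Icc
  exact hX.hasDerivAt_integral_Iic (h.continuousOn_X.continuousAt (isOpen_Iio.mem_nhds ht))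
    (by linarith)

theorem hasDerivAt_weightedY (h : StarSystem d q X Y Z W s) (lam : ℝ) (ht : t ∈ s)
    (hI : HasDerivAt (fun u => ∫ τ in Iic u, X τ) (X t) t) :
    HasDerivAt (weightedY lam X Y) (weightedY lam X Y t * ((d : ℝ) * X t ^ 2 + Z t ^ 2)) t :=
  ((hI.exp.const_mul lam).mul (h t ht).2.1).congr_deriv (by unfold weightedY; ring)

end StarSystem

theorem stmt12_general (d : ℕ) (q : ℝ) (tmax : ℝ) (X Y Z W : ℝ → ℝ)
    (hode : StarSystem d q X Y Z W (Set.Iio tmax))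
    (hlimZ : Tendsto Z atBot (𝓝 1))
    (T0 : ℝ) (hT0 : T0 < tmax) (hint : IntegrableOn X (Set.Iic T0))
    (t0 : ℝ) (ht0 : t0 < tmax) (hYt0 : 0 < Y t0)
    (lam : ℝ) (hlam : 0 < lam) :
    StrictMonoOn (fun t => lam * Real.exp (∫ τ in Set.Iic t, X τ) * Y t) (Set.Iio tmax) ∧
    (∀ t < tmax, 0 < lam * Real.exp (∫ τ in Set.Iic t, X τ) * Y t) ∧
    IntegrableOn (fun t => lam * Real.exp (∫ τ in Set.Iic t, X τ) * Y t) (Set.Iic T0) ∧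
    0 < ∫ t in Set.Iic T0, lam * Real.exp (∫ τ in Set.Iic t, X τ) * Y t := by
  set L := weightedY lam X Y
  have hL : ∀ t < tmax, HasDerivAt L (L t * ((d : ℝ) * X t ^ 2 + Z t ^ 2)) t := fun t ht =>
    hode.hasDerivAt_weightedY lam ht (hode.hasDerivAt_integral_Iic_X hint ht)
  have hLcont : ContinuousOn L (Iio tmax) := fun t ht => (hL t ht).continuousAt.continuousWithinAt
  have hLpos : ∀ t < tmax, 0 < L t := fun t ht =>
    mul_pos (mul_pos hlam (exp_pos _)) (hode.Y_pos isOpen_Iio (convex_Iio _) ht0 hYt0 ht)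
  have hLmono : StrictMonoOn L (Iio tmax) :=
    strictMonoOn_of_forall_hasDerivAt_pos (convex_Iio _) hL fun t ht =>
      mul_pos (hLpos t ht) (by have := hode.Z_pos hlimZ ht; positivity)
  have hLdecay : IntegrableAtFilter L atBot := by
    refine integrableAtFilter_atBot_of_le_deriv one_half_pos
      (f' := fun t => L t * ((d : ℝ) * X t ^ 2 + Z t ^ 2)) ?_
    filter_upwards [(hlimZ.pow 2).eventually (lt_mem_nhds (by norm_num : (1 / 2 : ℝ) < 1 ^ 2)),
      eventually_lt_atBot tmax] with t hZt ht
    refine ⟨hL t ht, (hLpos t ht).le, ?_⟩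
    nlinarith [hLpos t ht, mul_nonneg (Nat.cast_nonneg d : (0 : ℝ) ≤ d) (sq_nonneg (X t))]
  have hLint : IntegrableOn L (Iic T0) :=
    integrableOn_Iic_iff_integrableAtFilter_atBot.2 ⟨hLdecay,
      (hLcont.mono (Iic_subset_Iio.2 hT0)).locallyIntegrableOn measurableSet_Iic⟩
  have hLintegral : 0 < ∫ t in Iic T0, L t := by
    rw [setIntegral_pos_iff_support_of_nonneg_ae
      (ae_restrict_of_forall_mem measurableSet_Iic fun t ht => (hLpos t (ht.trans_lt hT0)).le) hLint]
    exact (by simp : 0 < volume (Iic T0)).trans_le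
      (measure_mono fun t ht => ⟨(hLpos t (mem_Iic.1 ht |>.trans_lt hT0)).ne', ht⟩)
  exact ⟨hLmono, hLpos, hLint, hLintegral⟩

/-- If `(X,Y,Z,W)` solves (★) on `(−∞, t_max)` with limit `(0,0,1,0)` at `−∞` and `X`
integrable on `(−∞, T₀]` for some `T₀ < t_max`, and if `Y(t₀) > 0` for some `t₀` and
`λ > 0`, then `𝓛(t) = λ·exp(∫_{−∞}^t X)·Y(t)` is strictly increasing and positive, and
`0 < ∫_{−∞}^{T₀} 𝓛 < ∞`. -/
theorem stmt12 (d : ℕ) (hd : 2 ≤ d) (q : ℝ) (tmax : ℝ) (X Y Z W : ℝ → ℝ)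
    (hode : StarSystem d q X Y Z W (Set.Iio tmax))
    (hlimX : Tendsto X atBot (𝓝 0)) (hlimY : Tendsto Y atBot (𝓝 0))
    (hlimZ : Tendsto Z atBot (𝓝 1)) (hlimW : Tendsto W atBot (𝓝 0))
    (T0 : ℝ) (hT0 : T0 < tmax) (hint : IntegrableOn X (Set.Iic T0))
    (t0 : ℝ) (ht0 : t0 < tmax) (hYt0 : 0 < Y t0)
    (lam : ℝ) (hlam : 0 < lam) :
    StrictMonoOn (fun t => lam * Real.exp (∫ τ in Set.Iic t, X τ) * Y t) (Set.Iio tmax) ∧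
    (∀ t < tmax, 0 < lam * Real.exp (∫ τ in Set.Iic t, X τ) * Y t) ∧
    IntegrableOn (fun t => lam * Real.exp (∫ τ in Set.Iic t, X τ) * Y t) (Set.Iic T0) ∧
    0 < ∫ t in Set.Iic T0, lam * Real.exp (∫ τ in Set.Iic t, X τ) * Y t :=
  stmt12_general d q tmax X Y Z W hode hlimZ T0 hT0 hint t0 ht0 hYt0 lam hlam
end

section
/- Let (X,Y,Z,W) be a solution of (★) on (−∞, t_max) such that: (i) Y(t) > 0 and W(t) > 0 for all t; (ii) (X,Y,Z,W)(t) → (0,0,1,0) as t → −∞; and (iii) the first integral equation holds with a constant 𝓒 > 0. Then negativity of X and of Z − X is forward invariant: if X(t₀) < 0 for some t₀ ∈ (−∞, t_max) then X(t) < 0 for all t ∈ (t₀, t_max), and if (Z − X)(t₀) < 0 for some t₀ ∈ (−∞, t_max) then (Z − X)(t) < 0 for all t ∈ (t₀, t_max). In particular, the limits lim_{t→t_max} g(t) and lim_{t→t_max} W(t)/Y(t) exist in the extended real numbers [−∞, +∞]. -/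
/-! With `ρ = W / Y` one has `ρ' = ρ (Z - X)`, and (★) gives
`(Z - X)' = (Z - X)(dX² + Z² - 1) + (Y² / d)((d + 2)A₃ρ² - A₂)` and
`X' = X(dX² + Z² - 1) + (Y² / d)(A₂ - 2A₃ρ²)`.

An interval on which `Z - X < 0` starts at a zero of `Z - X` (as `Z - X → 1` at `-∞`), where
`(d + 2)A₃ρ² ≤ A₂`; since `ρ` strictly decreases on it, `(d + 2)A₃ρ² < A₂` holds throughout and at
its right end, where it would have to fail if `Z - X` vanished there. Consequently `2A₃ρ² > A₂`
forces `Z - X ≥ 0`, which makes `A₂ - 2A₃ρ²` nonincreasing, so `2A₃ρ² ≤ A₂` propagates backwards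
in time. It holds at a first zero of `X` following a negative value; before that zero the first
integral then gives `dX² + Z² < 1`, so `X` increases wherever it is negative, which is absurd
since `X → 0` at `-∞`.

Once the signs of `X` and `Z - X` have settled, `g` (positive, with `g' = gX`) and `ρ` are
monotone near `t_max`, hence converge in `[-∞, +∞]`. -/

open Filter Topology MeasureTheory

open Set

section DerivSigns

variable {f f' : ℝ → ℝ} {a b : ℝ}

lemma strictMonoOn_of_hasDerivAt_pos {D : Set ℝ} (hD : Convex ℝ D)
    (hf : ∀ x ∈ D, HasDerivAt f (f' x) x) (hf' : ∀ x ∈ interior D, 0 < f' x) :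
    StrictMonoOn f D :=
  strictMonoOn_of_hasDerivWithinAt_pos hD (fun x hx => (hf x hx).continuousAt.continuousWithinAt)
    (fun x hx => (hf x (interior_subset hx)).hasDerivWithinAt) hf'

lemma strictAntiOn_of_hasDerivAt_neg {D : Set ℝ} (hD : Convex ℝ D)
    (hf : ∀ x ∈ D, HasDerivAt f (f' x) x) (hf' : ∀ x ∈ interior D, f' x < 0) :
    StrictAntiOn f D :=
  strictAntiOn_of_hasDerivWithinAt_neg hD (fun x hx => (hf x hx).continuousAt.continuousWithinAt)
    (fun x hx => (hf x (interior_subset hx)).hasDerivWithinAt) hf'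

lemma monotoneOn_of_hasDerivAt_nonneg {D : Set ℝ} (hD : Convex ℝ D)
    (hf : ∀ x ∈ D, HasDerivAt f (f' x) x) (hf' : ∀ x ∈ interior D, 0 ≤ f' x) :
    MonotoneOn f D :=
  monotoneOn_of_hasDerivWithinAt_nonneg hD (fun x hx => (hf x hx).continuousAt.continuousWithinAt)
    (fun x hx => (hf x (interior_subset hx)).hasDerivWithinAt) hf'

lemma antitoneOn_of_hasDerivAt_nonpos {D : Set ℝ} (hD : Convex ℝ D)
    (hf : ∀ x ∈ D, HasDerivAt f (f' x) x) (hf' : ∀ x ∈ interior D, f' x ≤ 0) :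
    AntitoneOn f D :=
  antitoneOn_of_hasDerivWithinAt_nonpos hD (fun x hx => (hf x hx).continuousAt.continuousWithinAt)
    (fun x hx => (hf x (interior_subset hx)).hasDerivWithinAt) hf'

lemma nonneg_of_hasDerivAt_of_le_left {f' : ℝ} (hf : HasDerivAt f f' b) (hab : a < b)
    (h : ∀ t ∈ Ioo a b, f t ≤ f b) : 0 ≤ f' := by
  refine ge_of_tendsto (hf.tendsto_slope.mono_left (nhdsLT_le_nhdsNE b)) ?_
  filter_upwards [Ioo_mem_nhdsLT hab] with t ht
  rw [slope_def_field]
  exact div_nonneg_of_nonpos (sub_nonpos.2 (h t ht)) (sub_nonpos.2 ht.2.le)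

lemma nonpos_of_hasDerivAt_of_le_right {f' : ℝ} (hf : HasDerivAt f f' a) (hab : a < b)
    (h : ∀ t ∈ Ioo a b, f t ≤ f a) : f' ≤ 0 := by
  refine le_of_tendsto (hf.tendsto_slope.mono_left (nhdsGT_le_nhdsNE a)) ?_
  filter_upwards [Ioo_mem_nhdsGT hab] with t ht
  rw [slope_def_field]
  exact div_nonpos_of_nonpos_of_nonneg (sub_nonpos.2 (h t ht)) (sub_nonneg.2 ht.1.le)

lemma exists_first_zero (hab : a ≤ b) (hf : ContinuousOn f (Icc a b)) (ha : f a < 0)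
    (hb : 0 ≤ f b) : ∃ τ ∈ Ioc a b, f τ = 0 ∧ ∀ t ∈ Ico a τ, f t < 0 := by
  set K := Icc a b ∩ f ⁻¹' Ici 0
  have hKbdd : BddBelow K := ⟨a, fun x hx => hx.1.1⟩
  have hτ : sInf K ∈ K :=
    (hf.preimage_isClosed_of_isClosed isClosed_Icc isClosed_Ici).csInf_mem
      ⟨b, ⟨hab, le_rfl⟩, hb⟩ hKbdd
  have hneg : ∀ t ∈ Ico a (sInf K), f t < 0 := fun t ht =>
    not_le.1 fun h => (csInf_le hKbdd ⟨⟨ht.1, ht.2.le.trans hτ.1.2⟩, h⟩).not_gt ht.2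
  have hlt : a < sInf K := hτ.1.1.lt_of_ne fun h => ha.not_ge (h ▸ hτ.2)
  refine ⟨sInf K, ⟨hlt, hτ.1.2⟩, le_antisymm ?_ hτ.2, hneg⟩
  have hclosed : IsClosed (Icc a b ∩ f ⁻¹' Iic 0) :=
    hf.preimage_isClosed_of_isClosed isClosed_Icc isClosed_Iic
  have hsub : Ico a (sInf K) ⊆ Icc a b ∩ f ⁻¹' Iic 0 := fun t ht =>
    ⟨⟨ht.1, ht.2.le.trans hτ.1.2⟩, (hneg t ht).le⟩
  have hτcl : sInf K ∈ closure (Ico a (sInf K)) := by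
    rw [closure_Ico hlt.ne]
    exact right_mem_Icc.2 hlt.le
  exact (hclosed.closure_subset_iff.2 hsub hτcl).2

lemma exists_last_zero (hab : a ≤ b) (hf : ContinuousOn f (Icc a b)) (ha : 0 ≤ f a)
    (hb : f b < 0) : ∃ σ ∈ Ico a b, f σ = 0 ∧ ∀ t ∈ Ioc σ b, f t < 0 := by
  have hf' : ContinuousOn (fun t => f (-t)) (Icc (-b) (-a)) :=
    hf.comp continuousOn_neg fun t ht => ⟨le_neg.1 ht.2, neg_le.1 ht.1⟩
  obtain ⟨τ, hτ, h0, hneg⟩ :=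
    exists_first_zero (neg_le_neg hab) hf' (by simpa using hb) (by simpa using ha)
  refine ⟨-τ, ⟨le_neg.2 hτ.2, neg_lt.1 hτ.1⟩, h0, fun t ht => ?_⟩
  simpa using hneg (-t) ⟨neg_le_neg ht.2, neg_lt.1 ht.1⟩

lemma neg_of_hasDerivAt_nonpos_of_neg (hab : a ≤ b) (hf : ∀ t ∈ Icc a b, HasDerivAt f (f' t) t)
    (hf' : ∀ t ∈ Icc a b, f t < 0 → f' t ≤ 0) (ha : f a < 0) : f b < 0 := by
  by_contra! hb
  obtain ⟨τ, hτ, h0, hneg⟩ := exists_first_zero hab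
    (fun t ht => (hf t ht).continuousAt.continuousWithinAt) ha hb
  have hanti : AntitoneOn f (Icc a τ) := antitoneOn_of_hasDerivAt_nonpos (convex_Icc a τ)
    (fun t ht => hf t ⟨ht.1, ht.2.trans hτ.2⟩) fun t ht => by
      rw [interior_Icc] at ht
      exact hf' t ⟨ht.1.le, ht.2.le.trans hτ.2⟩ (hneg t ⟨ht.1.le, ht.2⟩)
  have := hanti (left_mem_Icc.2 hτ.1.le) (right_mem_Icc.2 hτ.1.le) hτ.1.le
  linarith

lemma nonneg_of_hasDerivAt_pos_of_neg (hf : ∀ t ≤ b, HasDerivAt f (f' t) t)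
    (hf' : ∀ t ≤ b, f t < 0 → 0 < f' t) (hlim : Tendsto f atBot (𝓝 0)) : 0 ≤ f b := by
  by_contra! hb
  by_cases h : ∃ s ≤ b, 0 ≤ f s
  · obtain ⟨s, hsb, hs⟩ := h
    obtain ⟨σ, hσ, h0, hneg⟩ := exists_last_zero hsb
      (fun t ht => (hf t ht.2).continuousAt.continuousWithinAt) hs hb
    have hmono : StrictMonoOn f (Icc σ b) := strictMonoOn_of_hasDerivAt_pos (convex_Icc σ b)
      (fun t ht => hf t ht.2) fun t ht => by
        rw [interior_Icc] at ht
        exact hf' t ht.2.le (hneg t ⟨ht.1, ht.2.le⟩)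
    have := hmono (left_mem_Icc.2 hσ.2.le) (right_mem_Icc.2 hσ.2.le) hσ.2
    linarith
  · push Not at h
    have hmono : MonotoneOn f (Iic b) := monotoneOn_of_hasDerivAt_nonneg (convex_Iic b)
      hf fun t ht => by
        rw [interior_Iic] at ht
        exact (hf' t ht.le (h t ht.le)).le
    have : 0 ≤ f b := le_of_tendsto hlim
      ((eventually_le_atBot b).mono fun t ht => hmono ht self_mem_Iic ht)
    linarith

lemma exists_tendsto_nhdsLT_of_hasDerivAt_mul {c v : ℝ → ℝ} {T : ℝ}
    (hf : ∀ t < T, HasDerivAt f (c t * v t) t) (hc : ∀ t < T, 0 ≤ c t)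
    (hv : ∀ t₁ < T, v t₁ < 0 → ∀ t, t₁ < t → t < T → v t < 0) :
    ∃ l : EReal, Tendsto (fun t => (f t : EReal)) (𝓝[<] T) (𝓝 l) := by
  by_cases h : ∃ t₁ < T, v t₁ < 0
  · obtain ⟨t₁, ht₁, hv₁⟩ := h
    have hanti : AntitoneOn f (Ioo t₁ T) := antitoneOn_of_hasDerivAt_nonpos (convex_Ioo t₁ T)
      (fun t ht => hf t ht.2) fun t ht => by
        rw [interior_Ioo] at ht
        exact mul_nonpos_of_nonneg_of_nonpos (hc t ht.2) (hv t₁ ht₁ hv₁ t ht.1 ht.2).le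
    exact ⟨_, (EReal.coe_strictMono.monotone.comp_antitoneOn hanti).tendsto_nhdsWithin_Ioo_left
      (nonempty_Ioo.2 ht₁) (OrderBot.bddBelow _)⟩
  · push Not at h
    have hmono : MonotoneOn f (Ioo (T - 1) T) := monotoneOn_of_hasDerivAt_nonneg
      (convex_Ioo _ T) (fun t ht => hf t ht.2) fun t ht => by
        rw [interior_Ioo] at ht
        exact mul_nonneg (hc t ht.2) (h t ht.2)
    exact ⟨_, (EReal.coe_strictMono.monotone.comp_monotoneOn hmono).tendsto_nhdsWithin_Ioo_left
      (nonempty_Ioo.2 (by linarith)) (OrderTop.bddAbove _)⟩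

end DerivSigns

lemma pos_of_hasDerivAt_mul_s14 {g a : ℝ → ℝ} {T t₀ : ℝ} (ha : ContinuousOn a (Iio T))
    (hg : ∀ t < T, HasDerivAt g (g t * a t) t) (ht₀ : t₀ < T) (hg₀ : 0 < g t₀) {t : ℝ}
    (ht : t < T) : 0 < g t := by
  set E : ℝ → ℝ := fun s => Real.exp (-∫ r in t₀..s, a r)
  have hA : ∀ s < T, HasDerivAt (fun s => ∫ r in t₀..s, a r) (a s) s := fun s hs =>
    intervalIntegral.integral_hasDerivAt_right
      ((ha.mono fun r hr => hr.2.trans_lt (max_lt ht₀ hs)).intervalIntegrable)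
      (ha.stronglyMeasurableAtFilter isOpen_Iio s hs) (ha.continuousAt (Iio_mem_nhds hs))
  have hgE : ∀ s < T, HasDerivAt (fun s => g s * E s) 0 s := fun s hs => by
    have hE : HasDerivAt E (E s * -a s) s := (hA s hs).neg.exp
    exact ((hg s hs).mul hE).congr_deriv (by ring)
  have hconst : g t * E t = g t₀ * E t₀ :=
    isOpen_Iio.is_const_of_deriv_eq_zero isPreconnected_Iio
      (fun s hs => (hgE s hs).differentiableAt.differentiableWithinAt)
      (fun s hs => (hgE s hs).deriv) ht ht₀
  have hpos : 0 < g t * E t := by simpa [hconst, E] using hg₀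
  exact pos_of_mul_pos_left hpos (Real.exp_pos _).le

lemma A2_pos {d : ℕ} (hd : 0 < d) : 0 < A2 d := by
  unfold A2
  positivity

lemma A3_nonneg (d : ℕ) (q : ℝ) : 0 ≤ A3 d q := by
  unfold A3
  positivity

namespace StarSystem

variable {d : ℕ} {q T : ℝ} {X Y Z W : ℝ → ℝ} {t : ℝ}

lemma hasDerivAt_div (hode : StarSystem d q X Y Z W (Iio T)) (ht : t < T) (hYt : Y t ≠ 0) :
    HasDerivAt (fun s => W s / Y s) (W t / Y t * (Z t - X t)) t := by
  obtain ⟨-, hY', -, hW'⟩ := hode t ht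
  refine (hW'.div hY' hYt).congr_deriv ?_
  field_simp
  ring

lemma hasDerivAt_sub (hode : StarSystem d q X Y Z W (Iio T)) (hd : 0 < d) (ht : t < T)
    (hYt : Y t ≠ 0) :
    HasDerivAt (fun s => Z s - X s) ((Z t - X t) * (d * X t ^ 2 + Z t ^ 2 - 1)
      + Y t ^ 2 / d * ((d + 2) * A3 d q * (W t / Y t) ^ 2 - A2 d)) t := by
  obtain ⟨hX', -, hZ', -⟩ := hode t ht
  have hd' : (d : ℝ) ≠ 0 := by positivity
  refine (hZ'.sub hX').congr_deriv ?_
  field_simp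
  ring

lemma hasDerivAt_X (hode : StarSystem d q X Y Z W (Iio T)) (hd : 0 < d) (ht : t < T)
    (hYt : Y t ≠ 0) :
    HasDerivAt X (X t * (d * X t ^ 2 + Z t ^ 2 - 1)
      + Y t ^ 2 / d * (A2 d - 2 * A3 d q * (W t / Y t) ^ 2)) t := by
  have hd' : (d : ℝ) ≠ 0 := by positivity
  refine (hode t ht).1.congr_deriv ?_
  field_simp
  ring

lemma A3_mul_div_sq_lt_of_sub_neg (hode : StarSystem d q X Y Z W (Iio T)) (hd : 0 < d)
    (hY : ∀ t < T, 0 < Y t) (hW : ∀ t < T, 0 < W t) {σ : ℝ} (hσt : σ < t) (ht : t < T)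
    (hσ : Z σ - X σ = 0) (hneg : ∀ s ∈ Ioo σ t, Z s - X s < 0) :
    (d + 2) * A3 d q * (W t / Y t) ^ 2 < A2 d := by
  have hσT : σ < T := hσt.trans ht
  have hFσ : (d + 2) * A3 d q * (W σ / Y σ) ^ 2 - A2 d ≤ 0 := by
    have h := nonpos_of_hasDerivAt_of_le_right (hode.hasDerivAt_sub hd hσT (hY σ hσT).ne') hσt
      fun s hs => hσ ▸ (hneg s hs).le
    rw [hσ, zero_mul, zero_add] at h
    exact nonpos_of_mul_nonpos_right h (by have := hY σ hσT; positivity)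
  have hanti : StrictAntiOn (fun s => W s / Y s) (Icc σ t) :=
    strictAntiOn_of_hasDerivAt_neg (convex_Icc σ t)
      (fun s hs => hode.hasDerivAt_div (hs.2.trans_lt ht) (hY s (hs.2.trans_lt ht)).ne')
      fun s hs => by
        rw [interior_Icc] at hs
        have hsT : s < T := hs.2.trans ht
        exact mul_neg_of_pos_of_neg (div_pos (hW s hsT) (hY s hsT)) (hneg s hs)
  have hρ : W t / Y t < W σ / Y σ :=
    hanti (left_mem_Icc.2 hσt.le) (right_mem_Icc.2 hσt.le) hσt
  have hρt : 0 < W t / Y t := div_pos (hW t ht) (hY t ht)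
  rcases (A3_nonneg d q).eq_or_lt with hA3 | hA3
  · simpa [← hA3] using A2_pos hd
  · have : (W t / Y t) ^ 2 < (W σ / Y σ) ^ 2 := pow_lt_pow_left₀ hρ hρt.le two_ne_zero
    have : (d + 2) * A3 d q * (W t / Y t) ^ 2 < (d + 2) * A3 d q * (W σ / Y σ) ^ 2 :=
      mul_lt_mul_of_pos_left this (by positivity)
    linarith

lemma A3_mul_div_sq_lt (hode : StarSystem d q X Y Z W (Iio T)) (hd : 0 < d)
    (hY : ∀ t < T, 0 < Y t) (hW : ∀ t < T, 0 < W t) (hu : ∀ᶠ s in atBot, 0 ≤ Z s - X s)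
    (ht : t < T) (hut : Z t - X t < 0) :
    (d + 2) * A3 d q * (W t / Y t) ^ 2 < A2 d := by
  obtain ⟨s, hs, hst⟩ := (hu.and (eventually_le_atBot t)).exists
  obtain ⟨σ, hσ, h0, hneg⟩ := exists_last_zero hst
    (fun r hr => (hode.hasDerivAt_sub hd (hr.2.trans_lt ht)
      (hY r (hr.2.trans_lt ht)).ne').continuousAt.continuousWithinAt) hs hut
  exact hode.A3_mul_div_sq_lt_of_sub_neg hd hY hW hσ.2 ht h0 fun r hr => hneg r ⟨hr.1, hr.2.le⟩

theorem sub_neg_of_sub_neg (hode : StarSystem d q X Y Z W (Iio T)) (hd : 0 < d)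
    (hY : ∀ t < T, 0 < Y t) (hW : ∀ t < T, 0 < W t) (hu : ∀ᶠ s in atBot, 0 ≤ Z s - X s)
    {t₁ : ℝ} (ht₁t : t₁ < t) (ht : t < T) (h₁ : Z t₁ - X t₁ < 0) : Z t - X t < 0 := by
  by_contra! h
  have hcont : ∀ r < T, ContinuousAt (fun s => Z s - X s) r := fun r hr =>
    (hode.hasDerivAt_sub hd hr (hY r hr).ne').continuousAt
  obtain ⟨τ, hτ, hτ0, hτneg⟩ := exists_first_zero ht₁t.le
    (fun r hr => (hcont r (hr.2.trans_lt ht)).continuousWithinAt) h₁ h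
  have hτT : τ < T := hτ.2.trans_lt ht
  obtain ⟨s, hs, hst⟩ := (hu.and (eventually_le_atBot t₁)).exists
  obtain ⟨σ, hσ, hσ0, hσneg⟩ := exists_last_zero hst
    (fun r hr => (hcont r (hr.2.trans_lt (ht₁t.trans ht))).continuousWithinAt) hs h₁
  have hFτ_neg := hode.A3_mul_div_sq_lt_of_sub_neg hd hY hW (hσ.2.trans hτ.1) hτT hσ0
    fun r hr => (le_or_gt r t₁).elim (fun h => hσneg r ⟨hr.1, h⟩) fun h => hτneg r ⟨h.le, hr.2⟩
  have hFτ : 0 ≤ (d + 2) * A3 d q * (W τ / Y τ) ^ 2 - A2 d := by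
    have h := nonneg_of_hasDerivAt_of_le_left (hode.hasDerivAt_sub hd hτT (hY τ hτT).ne') hτ.1
      fun r hr => hτ0 ▸ (hτneg r ⟨hr.1.le, hr.2⟩).le
    rw [hτ0, zero_mul, zero_add] at h
    exact nonneg_of_mul_nonneg_right h (by have := hY τ hτT; positivity)
  linarith

lemma two_mul_A3_mul_div_sq_le (hode : StarSystem d q X Y Z W (Iio T)) (hd : 0 < d)
    (hY : ∀ t < T, 0 < Y t) (hW : ∀ t < T, 0 < W t) (hu : ∀ᶠ s in atBot, 0 ≤ Z s - X s)
    {τ : ℝ} (htτ : t ≤ τ) (hτ : τ < T) (hτle : 2 * A3 d q * (W τ / Y τ) ^ 2 ≤ A2 d) :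
    2 * A3 d q * (W t / Y t) ^ 2 ≤ A2 d := by
  by_contra! h
  have hderiv : ∀ s < T, HasDerivAt (fun r => A2 d - 2 * A3 d q * (W r / Y r) ^ 2)
      (-(4 * A3 d q * (W s / Y s) ^ 2 * (Z s - X s))) s := fun s hs =>
    (((hode.hasDerivAt_div hs (hY s hs).ne').pow 2).const_mul _).const_sub _ |>.congr_deriv
      (by ring)
  have hneg := neg_of_hasDerivAt_nonpos_of_neg htτ (fun s hs => hderiv s (hs.2.trans_lt hτ))
    (fun s hs hs' => by
      have hsT : s < T := hs.2.trans_lt hτ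
      have hA3 := A3_nonneg d q
      have hdA3 : 0 ≤ (d : ℝ) * (A3 d q * (W s / Y s) ^ 2) := by positivity
      have hus : 0 ≤ Z s - X s := not_lt.1 fun hus =>
        (hode.A3_mul_div_sq_lt hd hY hW hu hsT hus).not_ge (by linarith)
      have := mul_nonneg (mul_nonneg hA3 (sq_nonneg (W s / Y s))) hus
      linarith)
    (by linarith)
  linarith

theorem X_neg_of_X_neg (hode : StarSystem d q X Y Z W (Iio T)) (hd : 0 < d)
    (hY : ∀ t < T, 0 < Y t) (hW : ∀ t < T, 0 < W t) (hu : ∀ᶠ s in atBot, 0 ≤ Z s - X s)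
    (hlimX : Tendsto X atBot (𝓝 0))
    (hfirst : ∀ t < T, d * X t ^ 2 + A2 d * Y t ^ 2 + Z t ^ 2 - A3 d q * W t ^ 2 ≤ 1)
    {t₁ : ℝ} (ht₁t : t₁ < t) (ht : t < T) (h₁ : X t₁ < 0) : X t < 0 := by
  by_contra! h
  obtain ⟨τ, hτ, hτ0, hτneg⟩ := exists_first_zero ht₁t.le
    (fun r hr => (hode r (hr.2.trans_lt ht)).1.continuousAt.continuousWithinAt) h₁ h
  have hτT : τ < T := hτ.2.trans_lt ht
  have hQτ : 2 * A3 d q * (W τ / Y τ) ^ 2 ≤ A2 d := by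
    have h := nonneg_of_hasDerivAt_of_le_left (hode.hasDerivAt_X hd hτT (hY τ hτT).ne') hτ.1
      fun r hr => hτ0 ▸ (hτneg r ⟨hr.1.le, hr.2⟩).le
    rw [hτ0, zero_mul, zero_add] at h
    linarith [nonneg_of_mul_nonneg_right h (by have := hY τ hτT; positivity)]
  have ht₁T : t₁ < T := ht₁t.trans ht
  refine h₁.not_ge (nonneg_of_hasDerivAt_pos_of_neg (fun s hs =>
    hode.hasDerivAt_X hd (hs.trans_lt ht₁T) (hY s (hs.trans_lt ht₁T)).ne') ?_ hlimX)
  intro s hs hXs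
  have hsT : s < T := hs.trans_lt ht₁T
  have hQs := hode.two_mul_A3_mul_div_sq_le hd hY hW hu (hs.trans hτ.1.le) hτT hQτ
  have hYs := hY s hsT
  have hWs : W s = W s / Y s * Y s := (div_mul_cancel₀ _ hYs.ne').symm
  have hS : (d : ℝ) * X s ^ 2 + Z s ^ 2 - 1 < 0 := by
    have := hfirst s hsT
    rw [hWs] at this
    nlinarith [mul_nonneg (sub_nonneg.2 hQs) (sq_nonneg (Y s)),
      mul_pos (A2_pos hd) (pow_pos hYs 2)]
  have : 0 ≤ Y s ^ 2 / d * (A2 d - 2 * A3 d q * (W s / Y s) ^ 2) :=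
    mul_nonneg (by positivity) (by linarith)
  nlinarith

end StarSystem

theorem stmt14_general (d : ℕ) (hd : 2 ≤ d) (q : ℝ) (tmax : ℝ) (X Y Z W g : ℝ → ℝ)
    (hode : StarSystem d q X Y Z W (Set.Iio tmax))
    (hY : ∀ t < tmax, 0 < Y t) (hW : ∀ t < tmax, 0 < W t)
    (hlimX : Tendsto X atBot (𝓝 0))
    (hlimZ : Tendsto Z atBot (𝓝 1))
    (t0 g0 : ℝ) (ht0 : t0 < tmax) (hg0 : 0 < g0) (hgt0 : g t0 = g0)
    (hgode : ∀ t < tmax, HasDerivAt g (g t * X t) t)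
    (C : ℝ) (hC : 0 < C)
    (hfirst : ∀ t < tmax,
      (d : ℝ) * X t^2 + A2 d * Y t^2 + Z t^2 - A3 d q * W t^2 = 1 - C * (g t * Y t)^2) :
    (∀ t1 < tmax, X t1 < 0 → ∀ t, t1 < t → t < tmax → X t < 0) ∧
    (∀ t1 < tmax, Z t1 - X t1 < 0 → ∀ t, t1 < t → t < tmax → Z t - X t < 0) ∧
    (∃ l : EReal, Tendsto (fun t => ((g t : ℝ) : EReal))
      (nhdsWithin tmax (Set.Iio tmax)) (𝓝 l)) ∧
    (∃ l : EReal, Tendsto (fun t => ((W t / Y t : ℝ) : EReal))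
      (nhdsWithin tmax (Set.Iio tmax)) (𝓝 l)) := by
  have hd₀ : 0 < d := by omega
  have hu : ∀ᶠ t in atBot, 0 ≤ Z t - X t := by
    have h : Tendsto (fun t => Z t - X t) atBot (𝓝 1) := by simpa using hlimZ.sub hlimX
    exact h.eventually (eventually_ge_nhds one_pos)
  have hfirst_le : ∀ t < tmax,
      (d : ℝ) * X t ^ 2 + A2 d * Y t ^ 2 + Z t ^ 2 - A3 d q * W t ^ 2 ≤ 1 := fun t ht => by
    linarith [hfirst t ht, mul_nonneg hC.le (sq_nonneg (g t * Y t))]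
  have hX : ∀ t1 < tmax, X t1 < 0 → ∀ t, t1 < t → t < tmax → X t < 0 :=
    fun _ _ h₁ _ ht₁t ht => hode.X_neg_of_X_neg hd₀ hY hW hu hlimX hfirst_le ht₁t ht h₁
  have hZX : ∀ t1 < tmax, Z t1 - X t1 < 0 → ∀ t, t1 < t → t < tmax → Z t - X t < 0 :=
    fun _ _ h₁ _ ht₁t ht => hode.sub_neg_of_sub_neg hd₀ hY hW hu ht₁t ht h₁
  have hg : ∀ t < tmax, 0 < g t := fun t ht =>
    pos_of_hasDerivAt_mul_s14 (fun s hs => (hode s hs).1.continuousAt.continuousWithinAt) hgode ht0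
      (hgt0 ▸ hg0) ht
  exact ⟨hX, hZX, exists_tendsto_nhdsLT_of_hasDerivAt_mul hgode (fun t ht => (hg t ht).le) hX,
    exists_tendsto_nhdsLT_of_hasDerivAt_mul (fun t ht => hode.hasDerivAt_div ht (hY t ht).ne')
      (fun t ht => (div_pos (hW t ht) (hY t ht)).le) hZX⟩

/-- Under the hypotheses of the first-integral setup, negativity of `X` and of `Z − X` is
forward invariant; in particular `g(t)` and `W(t)/Y(t)` have limits in `[−∞,+∞]` as
`t → t_max⁻`. -/
theorem stmt14 (d : ℕ) (hd : 2 ≤ d) (q : ℝ) (tmax : ℝ) (X Y Z W g : ℝ → ℝ)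
    (hode : StarSystem d q X Y Z W (Set.Iio tmax))
    (hY : ∀ t < tmax, 0 < Y t) (hW : ∀ t < tmax, 0 < W t)
    (hlimX : Tendsto X atBot (𝓝 0)) (hlimY : Tendsto Y atBot (𝓝 0))
    (hlimZ : Tendsto Z atBot (𝓝 1)) (hlimW : Tendsto W atBot (𝓝 0))
    (t0 g0 : ℝ) (ht0 : t0 < tmax) (hg0 : 0 < g0) (hgt0 : g t0 = g0)
    (hgode : ∀ t < tmax, HasDerivAt g (g t * X t) t)
    (C : ℝ) (hC : 0 < C)
    (hfirst : ∀ t < tmax,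
      (d : ℝ) * X t^2 + A2 d * Y t^2 + Z t^2 - A3 d q * W t^2 = 1 - C * (g t * Y t)^2) :
    (∀ t1 < tmax, X t1 < 0 → ∀ t, t1 < t → t < tmax → X t < 0) ∧
    (∀ t1 < tmax, Z t1 - X t1 < 0 → ∀ t, t1 < t → t < tmax → Z t - X t < 0) ∧
    (∃ l : EReal, Tendsto (fun t => ((g t : ℝ) : EReal))
      (nhdsWithin tmax (Set.Iio tmax)) (𝓝 l)) ∧
    (∃ l : EReal, Tendsto (fun t => ((W t / Y t : ℝ) : EReal))
      (nhdsWithin tmax (Set.Iio tmax)) (𝓝 l)) :=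
  stmt14_general d hd q tmax X Y Z W g hode hY hW hlimX hlimZ t0 g0 ht0 hg0 hgt0 hgode C hC hfirst
end

section
/- Fix an integer d ≥ 2 and set A₂ = d(d+2). Consider the planar ODE system X' = X(dX² + (d+2)²Ỹ² − 2X − (d+2)Ỹ), Ỹ' = Ỹ(dX² + (d+2)²Ỹ² − 3(d+2)Ỹ + 2). For all positive reals 𝓒₀, λ₀ there exists a solution (X, Ỹ) of this system defined on an interval of the form (−∞, t_max) such that: X(t) > 0 for all t; (X, Ỹ)(t) → (0, 2/(d+2)) as t → −∞; and lim_{t→−∞} (Ỹ(t) − 2/(d+2))/X(t) = −(𝓒₀λ₀² + A₂)/(d+2)². -/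
/-!
Write `Ỹ = 2/(d+2) + X·W`. In the coordinates `(X, W)` the system becomes
`X' = X·P(X, W)`, `W' = X·Q(W)` with `P(0, W) = 2`, so that, with `X` as the independent
variable, `dW/dX = Q/P` is a regular ODE which can be started at `W(0) = c` for any `c`. Time is
recovered from `dt/dX = 1/(X·P) = 1/(2X) + (regular)`, so `t = log X / 2 + O(1)` tends to `−∞` as
`X → 0⁺`; inverting `t(X)` gives a solution on `(−∞, t_max)` with `X → 0` and
`(Ỹ − 2/(d+2))/X = W → c`.
-/

open Filter Topology

open Set

theorem exists_hasDerivAt_of_contDiffAt_uncurry {E : Type*} [NormedAddCommGroup E]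
    [NormedSpace ℝ E] [CompleteSpace E] {F : ℝ → E → E} {t₀ : ℝ} {x₀ : E}
    (hF : ContDiffAt ℝ 1 (Function.uncurry F) (t₀, x₀)) :
    ∃ u : ℝ → E, u t₀ = x₀ ∧ ∃ ε > (0 : ℝ),
      ∀ t ∈ Ioo (t₀ - ε) (t₀ + ε), HasDerivAt u (F t (u t)) t := by
  obtain ⟨α, hα₀, ε, hε, hα⟩ :=
    (contDiffAt_const (c := (1 : ℝ)).prodMk hF
      ).exists_forall_mem_closedBall_exists_eq_forall_mem_Ioo_hasDerivAt₀ t₀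
  have hfst : ∀ t ∈ Ioo (t₀ - ε) (t₀ + ε), HasDerivAt (fun t => (α t).1) 1 t := fun t ht =>
    (hasFDerivAt_fst (𝕜 := ℝ) (E := ℝ) (F := E)).comp_hasDerivAt t (hα t ht)
  have hclock : EqOn (fun t => (α t).1) id (Ioo (t₀ - ε) (t₀ + ε)) :=
    isOpen_Ioo.eqOn_of_deriv_eq isPreconnected_Ioo
      (fun t ht => (hfst t ht).differentiableAt.differentiableWithinAt)
      differentiableOn_id (fun t ht => by simp [(hfst t ht).deriv])
      (⟨by linarith, by linarith⟩ : t₀ ∈ Ioo (t₀ - ε) (t₀ + ε)) (by simp [hα₀])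
  refine ⟨fun t => (α t).2, by simp [hα₀], ε, hε, fun t ht => ?_⟩
  have h : HasDerivAt (fun t => (α t).2) (F (α t).1 (α t).2) t :=
    (hasFDerivAt_snd (𝕜 := ℝ) (E := ℝ) (F := E)).comp_hasDerivAt t (hα t ht)
  rwa [show (α t).1 = t from hclock ht] at h

theorem exists_rightInverse_hasDerivAt_of_tendsto_atBot {T T' : ℝ → ℝ} {a b : ℝ} (hab : a < b)
    (hT : ∀ x ∈ Ioo a b, HasDerivAt T (T' x) x) (hT' : ∀ x ∈ Ioo a b, 0 < T' x)
    (hbot : Tendsto T (𝓝[>] a) atBot) :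
    ∃ tmax, ∃ X : ℝ → ℝ, (∀ t < tmax, X t ∈ Ioo a b ∧ HasDerivAt X (T' (X t))⁻¹ t) ∧
      Tendsto X atBot (𝓝 a) := by
  have hmono : StrictMonoOn T (Ioo a b) :=
    strictMonoOn_of_hasDerivWithinAt_pos (convex_Ioo a b)
      (fun x hx => (hT x hx).continuousAt.continuousWithinAt)
      (fun x hx => (hT x (interior_subset hx)).hasDerivWithinAt)
      (fun x hx => hT' x (interior_subset hx))
  obtain ⟨c, hac, hcb⟩ := exists_between hab
  have hsub : Ioo a c ⊆ Ioo a b := Ioo_subset_Ioo_right hcb.le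
  have hsurj : ∀ t < T c, ∃ x ∈ Ioo a c, T x = t := by
    intro t ht
    obtain ⟨x₀, hx₀t, hx₀⟩ :=
      ((hbot.eventually (eventually_lt_atBot t)).and (Ioo_mem_nhdsGT hac)).exists
    have hcont : ContinuousOn T (Icc x₀ c) := fun x hx =>
      (hT x ⟨hx₀.1.trans_le hx.1, hx.2.trans_lt hcb⟩).continuousAt.continuousWithinAt
    obtain ⟨x, hx, rfl⟩ := intermediate_value_Ioo hx₀.2.le hcont ⟨hx₀t, ht⟩
    exact ⟨x, ⟨hx₀.1.trans hx.1, hx.2⟩, rfl⟩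
  have hlt : ∀ x ∈ Ioo a c, T x < T c := fun x hx => hmono (hsub hx) ⟨hac, hcb⟩ hx.2
  set X := Function.invFunOn T (Ioo a c)
  have hX : ∀ t < T c, X t ∈ Ioo a c ∧ T (X t) = t := fun t ht =>
    ⟨Function.invFunOn_mem (hsurj t ht), Function.invFunOn_eq (hsurj t ht)⟩
  have hXT : ∀ x ∈ Ioo a c, X (T x) = x := fun x hx =>
    hmono.injOn (hsub (hX _ (hlt x hx)).1) (hsub hx) (hX _ (hlt x hx)).2
  have hXmono : StrictMonoOn X (Iio (T c)) := fun s hs t ht hst =>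
    (hmono.lt_iff_lt (hsub (hX s hs).1) (hsub (hX t ht).1)).1 <| by
      rwa [(hX s hs).2, (hX t ht).2]
  refine ⟨T c, X, fun t ht => ⟨hsub (hX t ht).1, ?_⟩, ?_⟩
  · have hcont : ContinuousAt X t := by
      refine hXmono.continuousAt_of_image_mem_nhds (Iio_mem_nhds ht)
        (mem_of_superset (isOpen_Ioo.mem_nhds (hX t ht).1) fun x hx => ?_)
      exact ⟨T x, hlt x hx, hXT x hx⟩
    exact HasDerivAt.of_local_left_inverse hcont (hT _ (hsub (hX t ht).1))
      (hT' _ (hsub (hX t ht).1)).ne'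
      (eventually_of_mem (Iio_mem_nhds ht) fun s hs => (hX s hs).2)
  · refine tendsto_order.2 ⟨fun a' ha' => ?_, fun a' ha' => ?_⟩
    · filter_upwards [eventually_lt_atBot (T c)] with t ht
      exact ha'.trans (hX t ht).1.1
    · obtain ⟨x, hax, hx⟩ := exists_between (lt_min ha' hac)
      have hxc : x ∈ Ioo a c := ⟨hax, hx.trans_le (min_le_right _ _)⟩
      filter_upwards [eventually_lt_atBot (T x)] with t ht
      calc X t < X (T x) := hXmono (ht.trans (hlt x hxc)) (hlt x hxc) ht
        _ = x := hXT x hxc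
        _ < a' := hx.trans_le (min_le_left _ _)

-- `blowupRateX` and `blowupRateW` are the `P` and `Q` of the header.
def blowupCorr (d x w : ℝ) : ℝ := 2 - 3 * (d + 2) * w - d * x - (d + 2) ^ 2 * x * w ^ 2

def blowupRateX (d x w : ℝ) : ℝ := 2 - x * blowupCorr d x w

noncomputable def blowupRateW (d w : ℝ) : ℝ := 2 * d / (d + 2) + 2 * w

theorem hasDerivAt_system_of_blowup {d : ℝ} (hD : d + 2 ≠ 0) {X W : ℝ → ℝ} {t : ℝ}
    (hX : HasDerivAt X (X t * blowupRateX d (X t) (W t)) t)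
    (hW : HasDerivAt W (X t * blowupRateW d (W t)) t) :
    HasDerivAt X (X t * (d * X t ^ 2 + (d + 2) ^ 2 * (2 / (d + 2) + X t * W t) ^ 2 - 2 * X t
        - (d + 2) * (2 / (d + 2) + X t * W t))) t ∧
      HasDerivAt (fun s => 2 / (d + 2) + X s * W s)
        ((2 / (d + 2) + X t * W t) * (d * X t ^ 2 + (d + 2) ^ 2 * (2 / (d + 2) + X t * W t) ^ 2
          - 3 * (d + 2) * (2 / (d + 2) + X t * W t) + 2)) t := by
  constructor
  · refine hX.congr_deriv ?_
    simp only [blowupRateX, blowupCorr]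
    field_simp
    ring
  · refine ((hX.mul hW).const_add _).congr_deriv ?_
    simp only [blowupRateX, blowupCorr, blowupRateW]
    field_simp
    ring

theorem exists_blowup_solution (d c : ℝ) :
    ∃ tmax, ∃ X W : ℝ → ℝ,
      (∀ t < tmax, 0 < X t ∧ HasDerivAt X (X t * blowupRateX d (X t) (W t)) t ∧
        HasDerivAt W (X t * blowupRateW d (W t)) t) ∧
      Tendsto X atBot (𝓝 0) ∧ Tendsto W atBot (𝓝 c) := by
  -- `u x = (W, τ)` along the orbit, parametrised by `x = X`; the time is `t = τ + log x / 2`.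
  obtain ⟨u, hu₀, ε, hε, hu⟩ := exists_hasDerivAt_of_contDiffAt_uncurry
    (F := fun x (p : ℝ × ℝ) =>
      (blowupRateW d p.1 / blowupRateX d x p.1, blowupCorr d x p.1 / (2 * blowupRateX d x p.1)))
    (t₀ := 0) (x₀ := (c, 0))
    (by simp only [blowupRateX, blowupCorr, blowupRateW]; fun_prop (disch := simp))
  simp only [zero_sub, zero_add] at hu
  set w := fun x => (u x).1
  set τ := fun x => (u x).2
  have hw : ∀ x ∈ Ioo (-ε) ε, HasDerivAt w (blowupRateW d (w x) / blowupRateX d x (w x)) x :=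
    fun x hx => (hasFDerivAt_fst (𝕜 := ℝ) (E := ℝ) (F := ℝ)).comp_hasDerivAt x (hu x hx)
  have hτ : ∀ x ∈ Ioo (-ε) ε,
      HasDerivAt τ (blowupCorr d x (w x) / (2 * blowupRateX d x (w x))) x :=
    fun x hx => (hasFDerivAt_snd (𝕜 := ℝ) (E := ℝ) (F := ℝ)).comp_hasDerivAt x (hu x hx)
  have h₀ : (0 : ℝ) ∈ Ioo (-ε) ε := ⟨neg_lt_zero.2 hε, hε⟩
  have hwc : ContinuousAt w 0 := (hw 0 h₀).continuousAt
  have hw₀ : Tendsto w (𝓝 0) (𝓝 c) := by simpa [w, hu₀] using hwc.tendsto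
  have hτ₀ : Tendsto τ (𝓝 0) (𝓝 0) := by
    simpa [τ, hu₀] using (hτ 0 h₀).continuousAt.tendsto
  have hpos : ∀ᶠ x in 𝓝[>] 0, x < ε ∧ 0 < blowupRateX d x (w x) := by
    have hrate : Tendsto (fun x => blowupRateX d x (w x)) (𝓝 0) (𝓝 2) := by
      have hcont : ContinuousAt (fun x => blowupRateX d x (w x)) 0 := by
        simp only [blowupRateX, blowupCorr]; fun_prop
      simpa [blowupRateX] using hcont.tendsto
    exact nhdsWithin_le_nhds
      ((eventually_lt_nhds hε).and (hrate.eventually (eventually_gt_nhds two_pos)))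
  obtain ⟨r, hr, hr_sub⟩ := mem_nhdsGT_iff_exists_Ioo_subset.1 hpos
  set T := fun x => τ x + Real.log x / 2
  have hT : ∀ x ∈ Ioo 0 r, HasDerivAt T (x * blowupRateX d x (w x))⁻¹ x := by
    intro x hx
    obtain ⟨hxε, hxpos⟩ := hr_sub hx
    refine ((hτ x ⟨by linarith [hx.1], hxε⟩).add
      ((Real.hasDerivAt_log hx.1.ne').div_const 2)).congr_deriv ?_
    have hx₀ := hx.1.ne'
    have hrate : 2 - blowupCorr d x (w x) * x ≠ 0 := by rw [mul_comm]; exact hxpos.ne'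
    rw [blowupRateX]
    field_simp
    ring
  have hTbot : Tendsto T (𝓝[>] 0) atBot :=
    (hτ₀.mono_left nhdsWithin_le_nhds).add_atBot
      (Real.tendsto_log_nhdsGT_zero.atBot_div_const two_pos)
  obtain ⟨tmax, X, hX, hX₀⟩ := exists_rightInverse_hasDerivAt_of_tendsto_atBot hr hT
    (fun x hx => inv_pos.2 (mul_pos hx.1 (hr_sub hx).2)) hTbot
  refine ⟨tmax, X, w ∘ X, fun t ht => ?_, hX₀, hw₀.comp hX₀⟩
  obtain ⟨hXt, hXd⟩ := hX t ht
  rw [inv_inv] at hXd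
  obtain ⟨hXε, hXrate⟩ := hr_sub hXt
  refine ⟨hXt.1, hXd, ((hw (X t) ⟨by linarith [hXt.1], hXε⟩).comp t hXd).congr_deriv ?_⟩
  have hrate := hXrate.ne'
  simp only [Function.comp_apply]
  field_simp

theorem exists_solution_tendsto_slope {d : ℝ} (hD : d + 2 ≠ 0) (c : ℝ) :
    ∃ (tmax : ℝ) (X Yt : ℝ → ℝ),
      (∀ t < tmax,
        HasDerivAt X
          (X t * (d * X t ^ 2 + (d + 2) ^ 2 * Yt t ^ 2 - 2 * X t - (d + 2) * Yt t)) t ∧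
        HasDerivAt Yt
          (Yt t * (d * X t ^ 2 + (d + 2) ^ 2 * Yt t ^ 2 - 3 * (d + 2) * Yt t + 2)) t) ∧
      (∀ t < tmax, 0 < X t) ∧
      Tendsto X atBot (𝓝 0) ∧
      Tendsto Yt atBot (𝓝 (2 / (d + 2))) ∧
      Tendsto (fun t => (Yt t - 2 / (d + 2)) / X t) atBot (𝓝 c) := by
  obtain ⟨tmax, X, W, hXW, hX, hW⟩ := exists_blowup_solution d c
  refine ⟨tmax, X, fun t => 2 / (d + 2) + X t * W t,
    fun t ht => hasDerivAt_system_of_blowup hD (hXW t ht).2.1 (hXW t ht).2.2,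
    fun t ht => (hXW t ht).1, hX, by simpa using tendsto_const_nhds.add (hX.mul hW), ?_⟩
  refine hW.congr' ?_
  filter_upwards [eventually_lt_atBot tmax] with t ht
  field_simp [(hXW t ht).1.ne']
  ring

theorem stmt19_general (d : ℕ) (C0 lam0 : ℝ) :
    ∃ (tmax : ℝ) (X Yt : ℝ → ℝ),
      (∀ t < tmax,
        HasDerivAt X
          (X t * ((d : ℝ) * X t^2 + ((d : ℝ) + 2)^2 * Yt t^2 - 2 * X t
            - ((d : ℝ) + 2) * Yt t)) t ∧
        HasDerivAt Yt
          (Yt t * ((d : ℝ) * X t^2 + ((d : ℝ) + 2)^2 * Yt t^2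
            - 3 * ((d : ℝ) + 2) * Yt t + 2)) t) ∧
      (∀ t < tmax, 0 < X t) ∧
      Tendsto X atBot (𝓝 0) ∧
      Tendsto Yt atBot (𝓝 (2 / ((d : ℝ) + 2))) ∧
      Tendsto (fun t => (Yt t - 2 / ((d : ℝ) + 2)) / X t) atBot
        (𝓝 (-(C0 * lam0^2 + A2 d) / ((d : ℝ) + 2)^2)) :=
  exists_solution_tendsto_slope (by positivity) _

/-- For every `𝓒₀, λ₀ > 0` there is a solution `(X, Ỹ)` of the planar system
`X' = X(dX² + (d+2)²Ỹ² − 2X − (d+2)Ỹ)`, `Ỹ' = Ỹ(dX² + (d+2)²Ỹ² − 3(d+2)Ỹ + 2)` on an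
interval `(−∞, t_max)` with `X > 0`, `(X,Ỹ) → (0, 2/(d+2))` as `t → −∞`, and
`(Ỹ − 2/(d+2))/X → −(𝓒₀λ₀² + A₂)/(d+2)²` as `t → −∞`. -/
theorem stmt19 (d : ℕ) (hd : 2 ≤ d) (C0 lam0 : ℝ) (hC0 : 0 < C0) (hlam0 : 0 < lam0) :
    ∃ (tmax : ℝ) (X Yt : ℝ → ℝ),
      (∀ t < tmax,
        HasDerivAt X
          (X t * ((d : ℝ) * X t^2 + ((d : ℝ) + 2)^2 * Yt t^2 - 2 * X t
            - ((d : ℝ) + 2) * Yt t)) t ∧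
        HasDerivAt Yt
          (Yt t * ((d : ℝ) * X t^2 + ((d : ℝ) + 2)^2 * Yt t^2
            - 3 * ((d : ℝ) + 2) * Yt t + 2)) t) ∧
      (∀ t < tmax, 0 < X t) ∧
      Tendsto X atBot (𝓝 0) ∧
      Tendsto Yt atBot (𝓝 (2 / ((d : ℝ) + 2))) ∧
      Tendsto (fun t => (Yt t - 2 / ((d : ℝ) + 2)) / X t) atBot
        (𝓝 (-(C0 * lam0^2 + A2 d) / ((d : ℝ) + 2)^2)) :=
  stmt19_general d C0 lam0
end
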